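/- arXiv:1311.0301 — 5 statements merged into one kernel-verified Lean document; each statement's English description precedes it below -/
import Mathlib

section
/- Let d ≥ 1 and let Ξ ⊆ ℝ^d be an open set such that ∂Ξ is a (d−1)-set. Then for all r₀, t₀ > 0 there exists a constant C > 0 (depending only on d, r₀, t₀ and the (d−1)-set constants of ∂Ξ) such that |{x ∈ Ξ : |x − x₀| < r and dist(x, ℝ^d ∖ Ξ) ≤ t r}| ≤ C t r^d for all x₀ in the closure of Ξ, all r ∈ (0, r₀], and all t ∈ (0, t₀], where |·| denotes d-dimensional Lebesgue measure. -/
/-!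
Every point of the strip lies within `w = t r` of `∂Ξ`, so the strip is covered by the balls of
radius `2w` around a maximal `w`-separated set of boundary points near `x₀`. The balls of radius
`w/2` around these points are disjoint, each carries `(d-1)`-measure `≳ w^(d-1)` of `∂Ξ`, and all
lie in one ball of radius `5r` centred on `∂Ξ`, which carries `≲ r^(d-1)`. Hence there are
`≲ (r/w)^(d-1)` of them and the strip has volume `≲ (r/w)^(d-1) w^d = t r^d`. The regularity
bounds are only available at radii `≤ 1`, so this runs for `r ≤ 1/5`; a larger ball `B(x₀, r)`,
`r ≤ r₀`, is covered by a fixed finite number of translates of `B(0, 1/5)`.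
-/

open MeasureTheory Metric Set
open scoped ENNReal NNReal

theorem TotallyBounded.exists_finset_isSeparated_isCover {X : Type*} [PseudoEMetricSpace X]
    {A : Set X} (hA : TotallyBounded A) {ε : ℝ≥0} (hε : ε ≠ 0) :
    ∃ C : Finset X, ↑C ⊆ A ∧ IsSeparated ε (C : Set X) ∧ IsCover ε A C := by
  obtain ⟨N, -, hNfin, hN⟩ := exists_finite_isCover_of_totallyBounded (ε := ε / 2) (by simpa) hA
  have hpack : packingNumber ε A ≠ ⊤ := by
    have := (packingNumber_two_mul_le_externalCoveringNumber (ε / 2) A).trans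
      hN.externalCoveringNumber_le_encard
    rw [mul_div_cancel₀ _ two_ne_zero] at this
    exact ne_top_of_le_ne_top (encard_ne_top_iff.2 hNfin) this
  have hfin : (maximalSeparatedSet ε A).Finite :=
    encard_ne_top_iff.1 (encard_maximalSeparatedSet hpack ▸ hpack)
  exact ⟨hfin.toFinset, by simpa using maximalSeparatedSet_subset,
    by simpa using isSeparated_maximalSeparatedSet,
    by simpa using isCover_maximalSeparatedSet hpack⟩

theorem Metric.IsSeparated.card_mul_le_measure {X : Type*} [PseudoMetricSpace X]
    [MeasurableSpace X] [OpensMeasurableSpace X] (μ : Measure X) {ε : ℝ≥0} {C : Finset X}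
    (hC : IsSeparated ε (C : Set X)) {a : ℝ≥0∞} (ha : ∀ y ∈ C, a ≤ μ (ball y (ε / 2)))
    {U : Set X} (hU : ∀ y ∈ C, ball y (ε / 2) ⊆ U) :
    C.card * a ≤ μ U := by
  have hdisj : (C : Set X).PairwiseDisjoint fun y => ball y (ε / 2) := fun y hy y' hy' hne =>
    ball_disjoint_ball <| by
      have hsep : (ε : ℝ≥0∞) < edist y y' := hC hy hy' hne
      rw [edist_nndist, ENNReal.coe_lt_coe, ← NNReal.coe_lt_coe, coe_nndist] at hsep
      linarith
  calc C.card * a = ∑ _y ∈ C, a := by simp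
    _ ≤ ∑ y ∈ C, μ (ball y (ε / 2)) := Finset.sum_le_sum ha
    _ = μ (⋃ y ∈ C, ball y (ε / 2)) :=
        (measure_biUnion_finset hdisj fun _ _ => measurableSet_ball).symm
    _ ≤ μ U := measure_mono (iUnion₂_subset hU)

section AhlforsRegular

variable {X : Type*} [MetricSpace X] [MeasurableSpace X] [BorelSpace X]

/-- `Γ` is an `s`-set (Jonsson–Wallin); with `s = d - 1` this is the paper's `(d-1)`-set. -/
def IsAhlforsRegular (Γ : Set X) (s b₁ b₂ : ℝ) : Prop :=
  ∀ x ∈ Γ, ∀ r : ℝ, 0 < r → r ≤ 1 →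
    ENNReal.ofReal (b₁ * r ^ s) ≤ μH[s] (Γ ∩ ball x r) ∧
      μH[s] (Γ ∩ ball x r) ≤ ENNReal.ofReal (b₂ * r ^ s)

theorem IsAhlforsRegular.card_mul_le {Γ : Set X} {s b₁ b₂ : ℝ} (hΓ : IsAhlforsRegular Γ s b₁ b₂)
    {C : Finset X} (hCΓ : ↑C ⊆ Γ) {ε : ℝ≥0} (hε : 0 < ε) (hε₁ : (ε : ℝ) ≤ 2)
    (hC : IsSeparated ε (C : Set X)) {y₀ : X} (hy₀ : y₀ ∈ Γ) {R : ℝ} (hR₀ : 0 < R) (hR : R ≤ 1)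
    (hCR : ∀ y ∈ C, ball y (ε / 2) ⊆ ball y₀ R) :
    C.card * ENNReal.ofReal (b₁ * (ε / 2) ^ s) ≤ ENNReal.ofReal (b₂ * R ^ s) := by
  refine (hC.card_mul_le_measure (μH[s].restrict Γ) (fun y hy => ?_) hCR).trans ?_
  · rw [Measure.restrict_apply measurableSet_ball, inter_comm]
    exact (hΓ y (hCΓ hy) _ (by positivity) (by linarith)).1
  · rw [Measure.restrict_apply measurableSet_ball, inter_comm]
    exact (hΓ y₀ hy₀ R hR₀ hR).2

end AhlforsRegular

def boundaryStrip {X : Type*} [PseudoMetricSpace X] (Ξ : Set X) (x₀ : X) (r w : ℝ) : Set X :=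
  {x ∈ Ξ | dist x x₀ < r ∧ infEDist x Ξᶜ ≤ ENNReal.ofReal w}

section BoundaryStrip

variable {X : Type*} [PseudoMetricSpace X] {Ξ : Set X} {x₀ : X} {r w : ℝ}

theorem boundaryStrip_subset_ball : boundaryStrip Ξ x₀ r w ⊆ ball x₀ r := fun _ hx => hx.2.1

theorem boundaryStrip_inter_ball_subset (c : X) (ρ : ℝ) :
    boundaryStrip Ξ x₀ r w ∩ ball c ρ ⊆ boundaryStrip Ξ c ρ w :=
  fun _ ⟨hx, hxc⟩ => ⟨hx.1, hxc, hx.2.2⟩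

end BoundaryStrip

theorem exists_finset_ball_subset_iUnion_ball_add {G : Type*} [SeminormedAddCommGroup G]
    [ProperSpace G] (R : ℝ) {ρ : ℝ} (hρ : 0 < ρ) :
    ∃ T : Finset G, ∀ (x : G) (r : ℝ), r ≤ R → ball x r ⊆ ⋃ c ∈ T, ball (x + c) ρ := by
  obtain ⟨T, -, hTfin, hT⟩ := (isCompact_closedBall (0 : G) R).finite_cover_balls hρ
  refine ⟨hTfin.toFinset, fun x r hr y hy => ?_⟩
  have hyx : y - x ∈ closedBall (0 : G) R := by
    rw [mem_closedBall_zero_iff, ← dist_eq_norm]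
    exact (mem_ball.1 hy).le.trans hr
  obtain ⟨c, hc, hyc⟩ := mem_iUnion₂.1 (hT hyx)
  refine mem_iUnion₂.2 ⟨c, hTfin.mem_toFinset.2 hc, ?_⟩
  rwa [mem_ball_iff_norm, sub_sub, ← mem_ball_iff_norm] at hyc

section FiniteDimensional

variable {E : Type*} [NormedAddCommGroup E] [NormedSpace ℝ E] [FiniteDimensional ℝ E]

theorem exists_mem_frontier_dist_le_of_infEDist_compl_le {Ξ : Set E} {x : E} (hx : x ∈ Ξ)
    {w : ℝ} (hw : 0 ≤ w) (h : infEDist x Ξᶜ ≤ ENNReal.ofReal w) :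
    ∃ z ∈ frontier Ξ, dist x z ≤ w := by
  have hΞ : Ξ ≠ univ := by
    rintro rfl
    simp at h
  obtain ⟨z, hz, hxz⟩ := exists_mem_frontier_infDist_compl_eq_dist hx hΞ
  exact ⟨z, hz, hxz ▸ ENNReal.toReal_le_of_le_ofReal hw h⟩

variable [MeasurableSpace E] [BorelSpace E] (μ : Measure E) [μ.IsAddHaarMeasure]

theorem addHaar_boundaryStrip_le_of_le {Ξ : Set E} {k : ℕ} (hk : Module.finrank ℝ E = k + 1)
    {b₁ b₂ : ℝ} (hb₁ : 0 < b₁) (hb₂ : 0 ≤ b₂) (hΞ : IsAhlforsRegular (frontier Ξ) k b₁ b₂)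
    (x₀ : E) {r w : ℝ} (hw : 0 < w) (hwr : w ≤ r) (hr₅ : r ≤ 1 / 5) :
    μ (boundaryStrip Ξ x₀ r w) ≤
      ENNReal.ofReal (2 * 20 ^ k * (b₂ / b₁) * w * r ^ k) * μ (ball 0 1) := by
  have hr : 0 < r := hw.trans_le hwr
  set ε := w.toNNReal
  have hε : 0 < ε := Real.toNNReal_pos.2 hw
  have hεw : (ε : ℝ) = w := Real.coe_toNNReal w hw.le
  have hF : TotallyBounded (frontier Ξ ∩ closedBall x₀ (2 * r)) :=
    (isCompact_closedBall x₀ (2 * r)).totallyBounded.subset inter_subset_right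
  obtain ⟨C, hCF, hCsep, hCcov⟩ := hF.exists_finset_isSeparated_isCover hε.ne'
  rw [isCover_iff_subset_iUnion_closedBall, hεw] at hCcov
  have hcover : boundaryStrip Ξ x₀ r w ⊆ ⋃ y ∈ C, closedBall y (2 * w) := by
    intro x hx
    obtain ⟨z, hz, hxz⟩ := exists_mem_frontier_dist_le_of_infEDist_compl_le hx.1 hw.le hx.2.2
    have hzx₀ : dist z x₀ ≤ 2 * r := by linarith [dist_triangle_left z x₀ x, hx.2.1]
    obtain ⟨y, hy, hzy⟩ := mem_iUnion₂.1 (hCcov ⟨hz, mem_closedBall.2 hzx₀⟩)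
    exact mem_iUnion₂.2 ⟨y, hy, mem_closedBall.2 <| by
      linarith [dist_triangle x z y, mem_closedBall.1 hzy]⟩
  have hcount : (C.card : ℝ) * (b₁ * (w / 2) ^ k) ≤ b₂ * (5 * r) ^ k := by
    rcases C.eq_empty_or_nonempty with rfl | ⟨y₀, hy₀⟩
    · simp only [Finset.card_empty, Nat.cast_zero, zero_mul]
      positivity
    have hball : ∀ y ∈ C, ball y (ε / 2) ⊆ ball y₀ (5 * r) := fun y hy => by
      refine ball_subset_ball' ?_
      have := dist_triangle_right y y₀ x₀
      linarith [mem_closedBall.1 (hCF hy).2, mem_closedBall.1 (hCF hy₀).2]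
    have h := hΞ.card_mul_le (fun y hy => (hCF hy).1) hε (by linarith) hCsep (hCF hy₀).1
      (by positivity) (by linarith) hball
    rwa [hεw, Real.rpow_natCast, Real.rpow_natCast, ← ENNReal.ofReal_natCast,
      ← ENNReal.ofReal_mul (by positivity), ENNReal.ofReal_le_ofReal_iff (by positivity)] at h
  calc μ (boundaryStrip Ξ x₀ r w) ≤ μ (⋃ y ∈ C, closedBall y (2 * w)) := measure_mono hcover
    _ ≤ ∑ y ∈ C, μ (closedBall y (2 * w)) := measure_biUnion_finset_le _ _
    _ = ENNReal.ofReal (C.card * (2 * w) ^ (k + 1)) * μ (ball 0 1) := by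
        simp only [Measure.addHaar_closedBall μ _ (by positivity : 0 ≤ 2 * w), hk,
          Finset.sum_const, nsmul_eq_mul, ENNReal.ofReal_mul (Nat.cast_nonneg _),
          ENNReal.ofReal_natCast, mul_assoc]
    _ ≤ ENNReal.ofReal (2 * 20 ^ k * (b₂ / b₁) * w * r ^ k) * μ (ball 0 1) := by
        gcongr ENNReal.ofReal ?_ * _
        calc (C.card : ℝ) * (2 * w) ^ (k + 1)
            = 2 * 4 ^ k * w / b₁ * (C.card * (b₁ * (w / 2) ^ k)) := by
              rw [div_pow, show (4 : ℝ) ^ k = 2 ^ k * 2 ^ k by rw [← mul_pow]; norm_num]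
              field_simp
              ring
          _ ≤ 2 * 4 ^ k * w / b₁ * (b₂ * (5 * r) ^ k) := by gcongr
          _ = 2 * 20 ^ k * (b₂ / b₁) * w * r ^ k := by
              rw [show (20 : ℝ) = 4 * 5 by norm_num, mul_pow, mul_pow]
              field_simp

theorem addHaar_boundaryStrip_le_of_le_one_fifth {Ξ : Set E} {k : ℕ}
    (hk : Module.finrank ℝ E = k + 1) {b₁ b₂ : ℝ} (hb₁ : 0 < b₁) (hb₂ : 0 ≤ b₂)
    (hΞ : IsAhlforsRegular (frontier Ξ) k b₁ b₂) (x₀ : E) {r w : ℝ} (hr : 0 < r)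
    (hr₅ : r ≤ 1 / 5) (hw : 0 < w) :
    μ (boundaryStrip Ξ x₀ r w) ≤
      ENNReal.ofReal (max (2 * 20 ^ k * (b₂ / b₁)) 1 * w * r ^ k) * μ (ball 0 1) := by
  by_cases hwr : w ≤ r
  · refine (addHaar_boundaryStrip_le_of_le μ hk hb₁ hb₂ hΞ x₀ hw hwr hr₅).trans ?_
    gcongr
    exact le_max_left _ _
  calc μ (boundaryStrip Ξ x₀ r w) ≤ μ (closedBall x₀ r) :=
        measure_mono (boundaryStrip_subset_ball.trans ball_subset_closedBall)
    _ = ENNReal.ofReal (r * r ^ k) * μ (ball 0 1) := by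
        rw [Measure.addHaar_closedBall μ x₀ hr.le, hk, pow_succ']
    _ ≤ ENNReal.ofReal (max (2 * 20 ^ k * (b₂ / b₁)) 1 * w * r ^ k) * μ (ball 0 1) := by
        gcongr ENNReal.ofReal ?_ * _
        rw [mul_assoc]
        calc r * r ^ k ≤ w * r ^ k := by gcongr; linarith
          _ ≤ _ := le_mul_of_one_le_left (by positivity) (le_max_right _ _)

theorem exists_addHaar_boundaryStrip_le {Ξ : Set E} {k : ℕ} (hk : Module.finrank ℝ E = k + 1)
    {b₁ b₂ : ℝ} (hb₁ : 0 < b₁) (hb₂ : 0 ≤ b₂) (hΞ : IsAhlforsRegular (frontier Ξ) k b₁ b₂)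
    (R : ℝ) :
    ∃ K > 0, ∀ (x₀ : E) (r w : ℝ), 0 < r → r ≤ R → 0 < w →
      μ (boundaryStrip Ξ x₀ r w) ≤ ENNReal.ofReal (K * w * r ^ k) * μ (ball 0 1) := by
  set K₁ := max (2 * 20 ^ k * (b₂ / b₁)) 1
  have hsmall := addHaar_boundaryStrip_le_of_le_one_fifth μ hk hb₁ hb₂ hΞ
  obtain ⟨T, hT⟩ := exists_finset_ball_subset_iUnion_ball_add (G := E) R (ρ := 1 / 5) (by norm_num)
  refine ⟨(T.card + 1) * K₁, by positivity, fun x₀ r w hr hrR hw => ?_⟩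
  by_cases hr₅ : r ≤ 1 / 5
  · refine (hsmall x₀ hr hr₅ hw).trans ?_
    gcongr
    exact le_mul_of_one_le_left (by positivity) (by simp)
  have hcover : boundaryStrip Ξ x₀ r w ⊆ ⋃ c ∈ T, boundaryStrip Ξ (x₀ + c) (1 / 5) w :=
    fun x hx => by
      obtain ⟨c, hc, hxc⟩ := mem_iUnion₂.1 (hT x₀ r hrR (boundaryStrip_subset_ball hx))
      exact mem_iUnion₂.2 ⟨c, hc, boundaryStrip_inter_ball_subset _ _ ⟨hx, hxc⟩⟩
  calc μ (boundaryStrip Ξ x₀ r w) ≤ μ (⋃ c ∈ T, boundaryStrip Ξ (x₀ + c) (1 / 5) w) :=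
        measure_mono hcover
    _ ≤ ∑ c ∈ T, μ (boundaryStrip Ξ (x₀ + c) (1 / 5) w) := measure_biUnion_finset_le _ _
    _ ≤ ∑ _c ∈ T, ENNReal.ofReal (K₁ * w * (1 / 5) ^ k) * μ (ball 0 1) :=
        Finset.sum_le_sum fun c _ => hsmall _ (by norm_num) le_rfl hw
    _ = ENNReal.ofReal (T.card * (K₁ * w * (1 / 5) ^ k)) * μ (ball 0 1) := by
        rw [Finset.sum_const, nsmul_eq_mul, ENNReal.ofReal_mul (Nat.cast_nonneg _),
          ENNReal.ofReal_natCast]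
        ring
    _ ≤ ENNReal.ofReal ((T.card + 1) * K₁ * w * r ^ k) * μ (ball 0 1) := by
        gcongr ENNReal.ofReal ?_ * _
        have h5 : (1 / 5 : ℝ) ^ k ≤ r ^ k := by gcongr; linarith
        calc (T.card : ℝ) * (K₁ * w * (1 / 5) ^ k) ≤ (T.card + 1) * (K₁ * w * r ^ k) := by
              gcongr
              linarith
          _ = (T.card + 1) * K₁ * w * r ^ k := by ring

end FiniteDimensional

theorem boundary_strip_lemma_general
    (d : ℕ) (hd : 1 ≤ d)
    (Ξ : Set (EuclideanSpace ℝ (Fin d)))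
    (b₁ b₂ : ℝ) (hb₁ : 0 < b₁) (hb : b₁ ≤ b₂)
    (hAD : ∀ x ∈ frontier Ξ, ∀ r : ℝ, 0 < r → r ≤ 1 →
      ENNReal.ofReal (b₁ * r ^ ((d : ℝ) - 1)) ≤ μH[(d : ℝ) - 1] (frontier Ξ ∩ ball x r) ∧
        μH[(d : ℝ) - 1] (frontier Ξ ∩ ball x r) ≤ ENNReal.ofReal (b₂ * r ^ ((d : ℝ) - 1)))
    (r₀ t₀ : ℝ) :
    ∃ C > 0, ∀ x₀ ∈ closure Ξ, ∀ r t : ℝ, 0 < r → r ≤ r₀ → 0 < t → t ≤ t₀ →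
      volume {x ∈ Ξ | dist x x₀ < r ∧ EMetric.infEdist x Ξᶜ ≤ ENNReal.ofReal (t * r)} ≤
        ENNReal.ofReal (C * t * r ^ d) := by
  obtain ⟨k, rfl⟩ : ∃ k, d = k + 1 := ⟨d - 1, by omega⟩
  rw [show ((k + 1 : ℕ) : ℝ) - 1 = k by push_cast; ring] at hAD
  obtain ⟨K, hK, hstrip⟩ := exists_addHaar_boundaryStrip_le volume finrank_euclideanSpace_fin hb₁
    (hb₁.le.trans hb) hAD r₀
  set ω := (volume (ball (0 : EuclideanSpace ℝ (Fin (k + 1))) 1)).toReal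
  have hball : volume (ball (0 : EuclideanSpace ℝ (Fin (k + 1))) 1) ≠ ⊤ := measure_ball_lt_top.ne
  have hω : 0 < ω := ENNReal.toReal_pos (measure_ball_pos _ _ one_pos).ne' hball
  refine ⟨K * ω, by positivity, fun x₀ _ r t hr hrr₀ ht _ => ?_⟩
  calc volume (boundaryStrip Ξ x₀ r (t * r))
      ≤ ENNReal.ofReal (K * (t * r) * r ^ k) * volume (ball 0 1) :=
        hstrip x₀ r (t * r) hr hrr₀ (by positivity)
    _ = ENNReal.ofReal (K * ω * t * r ^ (k + 1)) := by
        rw [show K * ω * t * r ^ (k + 1) = K * (t * r) * r ^ k * ω by ring,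
          ENNReal.ofReal_mul (p := K * (t * r) * r ^ k) (by positivity),
          ENNReal.ofReal_toReal hball]

/-- **Boundary strip lemma**: if `Ξ ⊆ ℝ^d` is open and `∂Ξ` is a `(d-1)`-set, then the part of
a ball `B(x₀, r)` in `Ξ` lying at distance at most `t·r` from the complement of `Ξ` has measure
at most `C·t·r^d`. -/
theorem boundary_strip_lemma
    (d : ℕ) (hd : 1 ≤ d)
    (Ξ : Set (EuclideanSpace ℝ (Fin d))) (hΞ : IsOpen Ξ)
    (b₁ b₂ : ℝ) (hb₁ : 0 < b₁) (hb : b₁ ≤ b₂)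
    (hAD : ∀ x ∈ frontier Ξ, ∀ r : ℝ, 0 < r → r ≤ 1 →
      ENNReal.ofReal (b₁ * r ^ ((d : ℝ) - 1)) ≤ μH[(d : ℝ) - 1] (frontier Ξ ∩ ball x r) ∧
        μH[(d : ℝ) - 1] (frontier Ξ ∩ ball x r) ≤ ENNReal.ofReal (b₂ * r ^ ((d : ℝ) - 1)))
    (r₀ t₀ : ℝ) (hr₀ : 0 < r₀) (ht₀ : 0 < t₀) :
    ∃ C > 0, ∀ x₀ ∈ closure Ξ, ∀ r t : ℝ, 0 < r → r ≤ r₀ → 0 < t → t ≤ t₀ →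
      volume {x ∈ Ξ | dist x x₀ < r ∧ EMetric.infEdist x Ξᶜ ≤ ENNReal.ofReal (t * r)} ≤
        ENNReal.ofReal (C * t * r ^ d) :=
  boundary_strip_lemma_general d hd Ξ b₁ b₂ hb₁ hb hAD r₀ t₀
end

section
/- Let d ≥ 1 and let Ξ ⊆ ℝ^d be a nonempty bounded open set satisfying the d-Ahlfors condition and such that ∂Ξ is a (d−1)-set. Then Ξ is κ-plump for some κ > 0: there exists κ > 0 such that for every x₀ in the closure of Ξ and every r ∈ (0, diam Ξ] there exists x ∈ Ξ with B(x, κr) ⊆ Ξ ∩ B(x₀, r). -/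
open MeasureTheory Metric Set

/-- Existence of a maximal `δ`-separated subset of `S`, given a uniform cardinality bound
on `δ`-separated finite subsets of `S`. -/
lemma exists_maximal_net {E : Type*} [MetricSpace E] (S : Set E) (δ : ℝ) (hδ : 0 < δ) (M : ℕ)
    (hM : ∀ Z : Finset E, ↑Z ⊆ S → (∀ z ∈ Z, ∀ z' ∈ Z, z ≠ z' → δ ≤ dist z z') → Z.card ≤ M) :
    ∃ Z : Finset E, ↑Z ⊆ S ∧ (∀ z ∈ Z, ∀ z' ∈ Z, z ≠ z' → δ ≤ dist z z') ∧
      ∀ y ∈ S, ∃ z ∈ Z, dist y z < δ := by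
  classical
  set T : Set ℕ := {n | ∃ Z : Finset E, ↑Z ⊆ S ∧
    (∀ z ∈ Z, ∀ z' ∈ Z, z ≠ z' → δ ≤ dist z z') ∧ Z.card = n} with hT
  have h0 : (0 : ℕ) ∈ T := ⟨∅, by simp, by simp, rfl⟩
  have hbdd : BddAbove T := ⟨M, by rintro n ⟨Z, h1, h2, rfl⟩; exact hM Z h1 h2⟩
  obtain ⟨Z, hZS, hZsep, hZcard⟩ := Nat.sSup_mem ⟨0, h0⟩ hbdd
  refine ⟨Z, hZS, hZsep, fun y hy => ?_⟩
  by_contra h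
  push_neg at h
  have hyZ : y ∉ Z := by
    intro hyZ
    have := h y hyZ
    rw [dist_self] at this
    linarith
  have hmem : (insert y Z).card ∈ T := by
    refine ⟨insert y Z, ?_, ?_, rfl⟩
    · rw [Finset.coe_insert]
      exact insert_subset hy hZS
    · intro z hz z' hz' hne
      simp only [Finset.mem_insert] at hz hz'
      rcases hz with rfl | hz
      · rcases hz' with rfl | hz'
        · exact absurd rfl hne
        · exact h z' hz'
      · rcases hz' with rfl | hz'
        · rw [dist_comm]; exact h z hz
        · exact hZsep z hz z' hz' hne
  have hle := le_csSup hbdd hmem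
  rw [Finset.card_insert_of_notMem hyZ, hZcard] at hle
  omega

/-- A ball avoiding the frontier of an open set, centered in the set, is contained in it. -/
lemma ball_subset_of_avoids_frontier {E : Type*} [NormedAddCommGroup E] [NormedSpace ℝ E]
    (Ξ : Set E) (hΞopen : IsOpen Ξ) {x : E} {δ : ℝ} (hx : x ∈ Ξ)
    (hdisj : ∀ y ∈ ball x δ, y ∉ frontier Ξ) : ball x δ ⊆ Ξ := by
  rcases le_or_gt δ 0 with hδ | hδ
  · rw [ball_eq_empty.2 hδ]; exact empty_subset _
  refine IsPreconnected.subset_left_of_subset_union hΞopen isClosed_closure.isOpen_compl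
    (disjoint_compl_right.mono_left subset_closure) ?_ ⟨x, mem_ball_self hδ, hx⟩
    (convex_ball x δ).isPreconnected
  intro y hy
  by_cases hyc : y ∈ closure Ξ
  · left
    by_contra hyΞ
    exact hdisj y hy (by
      rw [hΞopen.frontier_eq]
      exact ⟨hyc, hyΞ⟩)
  · right; exact hyc

set_option maxHeartbeats 4000000 in
/-- A bounded open `d`-set `Ξ ⊆ ℝ^d` whose boundary is a `(d-1)`-set is `κ`-plump. -/
theorem ahlfors_regular_implies_plump
    (d : ℕ) (hd : 1 ≤ d)
    (Ξ : Set (EuclideanSpace ℝ (Fin d))) (hΞne : Ξ.Nonempty)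
    (hΞopen : IsOpen Ξ) (hΞbdd : Bornology.IsBounded Ξ)
    (c₁ c₂ : ℝ) (hc₁ : 0 < c₁) (hc₁₂ : c₁ ≤ c₂)
    (hAhlfors : ∀ x ∈ Ξ, ∀ r : ℝ, 0 < r → r ≤ 1 →
      ENNReal.ofReal (c₁ * r ^ d) ≤ volume (Ξ ∩ ball x r) ∧
        volume (Ξ ∩ ball x r) ≤ ENNReal.ofReal (c₂ * r ^ d))
    (b₁ b₂ : ℝ) (hb₁ : 0 < b₁) (hb₁₂ : b₁ ≤ b₂)
    (hAD : ∀ x ∈ frontier Ξ, ∀ r : ℝ, 0 < r → r ≤ 1 →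
      ENNReal.ofReal (b₁ * r ^ ((d : ℝ) - 1)) ≤ μH[(d : ℝ) - 1] (frontier Ξ ∩ ball x r) ∧
        μH[(d : ℝ) - 1] (frontier Ξ ∩ ball x r) ≤ ENNReal.ofReal (b₂ * r ^ ((d : ℝ) - 1))) :
    ∃ κ > 0, ∀ x₀ ∈ closure Ξ, ∀ r : ℝ, 0 < r → r ≤ Metric.diam Ξ →
      ∃ x ∈ Ξ, ball x (κ * r) ⊆ Ξ ∩ ball x₀ r := by
  haveI : Nonempty (Fin d) := ⟨⟨0, hd⟩⟩
  have hb₂ : 0 < b₂ := hb₁.trans_le hb₁₂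
  set F := frontier Ξ with hFdef
  set e : ℝ := (d : ℝ) - 1 with hedef
  have he : 0 ≤ e := by
    rw [hedef, sub_nonneg]
    exact_mod_cast hd
  -- volume of balls
  set ω : ℝ := Real.sqrt Real.pi ^ d / Real.Gamma ((d : ℝ) / 2 + 1) with hωdef
  have hω : 0 < ω := by
    apply div_pos (pow_pos (Real.sqrt_pos.2 Real.pi_pos) d)
    apply Real.Gamma_pos_of_pos
    positivity
  have hvol : ∀ (z : EuclideanSpace ℝ (Fin d)) (ρ : ℝ), 0 ≤ ρ → volume (ball z ρ) = ENNReal.ofReal (ρ ^ d * ω) := by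
    intro z ρ hρ
    rw [EuclideanSpace.volume_ball, Fintype.card_fin, ← ENNReal.ofReal_pow hρ,
      ← ENNReal.ofReal_mul (by positivity)]
  -- the frontier is nonempty
  have hFne : F.Nonempty := by
    rw [hFdef, nonempty_frontier_iff]
    refine ⟨hΞne, fun huniv => ?_⟩
    obtain ⟨R, hR⟩ := hΞbdd.subset_closedBall (0 : EuclideanSpace ℝ (Fin d))
    set v : EuclideanSpace ℝ (Fin d) := EuclideanSpace.single ⟨0, hd⟩ (|R| + 1) with hvdef
    have hv : ‖v‖ = |R| + 1 := by
      rw [hvdef, EuclideanSpace.norm_single, Real.norm_eq_abs, abs_of_pos (by positivity)]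
    have hvΞ : v ∈ Ξ := huniv ▸ mem_univ v
    have hvb := hR hvΞ
    rw [mem_closedBall, dist_zero_right, hv] at hvb
    have := le_abs_self R
    linarith
  -- choice of constants
  have hden : 0 < b₂ * ω * 2 ^ (6 * d) := mul_pos (mul_pos hb₂ hω) (by positivity)
  set κ₀ : ℝ := min (1 / 2) (c₁ * b₁ / (b₂ * ω * 2 ^ (6 * d))) with hκ₀def
  have hκ₀pos : 0 < κ₀ := lt_min (by norm_num) (div_pos (mul_pos hc₁ hb₁) hden)
  have hκ₀half : κ₀ ≤ 1 / 2 := min_le_left _ _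
  have hκ₀small : κ₀ ≤ c₁ * b₁ / (b₂ * ω * 2 ^ (6 * d)) := min_le_right _ _
  set D : ℝ := max (Metric.diam Ξ) 1 with hDdef
  have hD1 : 1 ≤ D := le_max_right _ _
  have hDpos : 0 < D := by linarith
  refine ⟨κ₀ / (4 * D), by positivity, ?_⟩
  intro x₀ hx₀ r hr hrdiam
  set r' : ℝ := min r (1 / 4) with hr'def
  have hr'pos : 0 < r' := lt_min hr (by norm_num)
  have hr'14 : r' ≤ 1 / 4 := min_le_right _ _
  have hr'r : r' ≤ r := min_le_left _ _
  set δ : ℝ := κ₀ * r' with hδdef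
  have hδpos : 0 < δ := mul_pos hκ₀pos hr'pos
  have hδhalf : δ ≤ r' / 2 := by
    rw [hδdef]; nlinarith
  have hκr : κ₀ / (4 * D) * r ≤ δ := by
    rw [hδdef]
    have h1 : r / (4 * D) ≤ r' := by
      apply le_min
      · apply div_le_self hr.le; nlinarith
      · rw [div_le_iff₀ (by positivity)]
        have : r ≤ D := le_trans hrdiam (le_max_left (Metric.diam Ξ) 1)
        nlinarith
    calc κ₀ / (4 * D) * r = κ₀ * (r / (4 * D)) := by ring
      _ ≤ κ₀ * r' := by nlinarith
  -- a point of Ξ near x₀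
  obtain ⟨p, hpΞ, hpx₀⟩ := Metric.mem_closure_iff.1 hx₀ (r' / 4) (by positivity)
  -- main claim : there is a point of Ξ near p which is δ-far from the frontier
  have key : ∃ x ∈ Ξ ∩ ball p (r' / 4), δ ≤ Metric.infDist x F := by
    by_contra hcon
    push_neg at hcon
    -- the separated-set cardinality bound
    have hsepcard : ∀ Z : Finset (EuclideanSpace ℝ (Fin d)), ↑Z ⊆ F ∩ ball x₀ r' →
        (∀ z ∈ Z, ∀ z' ∈ Z, z ≠ z' → δ ≤ dist z z') →
        (Z.card : ℝ) * (b₁ * (δ / 2) ^ e) ≤ b₂ * (4 * r') ^ e := by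
      intro Z hZS hZsep
      rcases Z.eq_empty_or_nonempty with rfl | ⟨z₀, hz₀⟩
      · simp only [Finset.card_empty, Nat.cast_zero, zero_mul]
        exact le_of_lt (mul_pos hb₂ (Real.rpow_pos_of_pos (by positivity) _))
      · have hdisj : (↑Z : Set (EuclideanSpace ℝ (Fin d))).PairwiseDisjoint (fun z => F ∩ ball z (δ / 2)) := by
          intro a ha b hb hab
          exact Disjoint.mono inter_subset_right inter_subset_right
            (ball_disjoint_ball (by
              have := hZsep a ha b hb hab
              linarith))
        have hmeas : ∀ z ∈ Z, MeasurableSet (F ∩ ball z (δ / 2)) := fun z _ =>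
          isClosed_frontier.measurableSet.inter measurableSet_ball
        have hδ21 : δ / 2 ≤ 1 := by linarith
        have h4r1 : 4 * r' ≤ 1 := by linarith
        have hsub : (⋃ z ∈ Z, F ∩ ball z (δ / 2)) ⊆ F ∩ ball z₀ (4 * r') := by
          intro y hy
          simp only [mem_iUnion, exists_prop] at hy
          obtain ⟨z, hzZ, hyF, hyb⟩ := hy
          refine ⟨hyF, ?_⟩
          rw [mem_ball] at hyb ⊢
          have hz := hZS hzZ
          have hz₀' := hZS hz₀
          rw [mem_inter_iff, mem_ball] at hz hz₀'
          have hA1 : dist z x₀ < r' := hz.2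
          have hA2 : dist x₀ z₀ < r' := by rw [dist_comm]; exact hz₀'.2
          calc dist y z₀ ≤ dist y z + dist z x₀ + dist x₀ z₀ := dist_triangle4 y z x₀ z₀
            _ < 4 * r' := by linarith
        have hchain : (Z.card : ENNReal) * ENNReal.ofReal (b₁ * (δ / 2) ^ e) ≤
            ENNReal.ofReal (b₂ * (4 * r') ^ e) := by
          calc (Z.card : ENNReal) * ENNReal.ofReal (b₁ * (δ / 2) ^ e)
              = ∑ _z ∈ Z, ENNReal.ofReal (b₁ * (δ / 2) ^ e) := by
                rw [Finset.sum_const, nsmul_eq_mul]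
            _ ≤ ∑ z ∈ Z, μH[e] (F ∩ ball z (δ / 2)) := by
                refine Finset.sum_le_sum fun z hz => ?_
                have hzF : z ∈ F := (hZS hz).1
                exact (hAD z hzF (δ / 2) (by positivity) hδ21).1
            _ = μH[e] (⋃ z ∈ Z, F ∩ ball z (δ / 2)) :=
                (measure_biUnion_finset hdisj hmeas).symm
            _ ≤ μH[e] (F ∩ ball z₀ (4 * r')) := measure_mono hsub
            _ ≤ ENNReal.ofReal (b₂ * (4 * r') ^ e) :=
                (hAD z₀ (hZS hz₀).1 (4 * r') (by positivity) h4r1).2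
        have hrhs : 0 ≤ b₂ * (4 * r') ^ e :=
          le_of_lt (mul_pos hb₂ (Real.rpow_pos_of_pos (by positivity) _))
        have hchain2 : ENNReal.ofReal ((Z.card : ℝ) * (b₁ * (δ / 2) ^ e)) ≤
            ENNReal.ofReal (b₂ * (4 * r') ^ e) := by
          rw [ENNReal.ofReal_mul (Nat.cast_nonneg _), ENNReal.ofReal_natCast]
          exact hchain
        exact (ENNReal.ofReal_le_ofReal_iff hrhs).1 hchain2
    set M : ℕ := ⌊b₂ * (4 * r') ^ e / (b₁ * (δ / 2) ^ e)⌋₊ with hMdef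
    have hM : ∀ Z : Finset (EuclideanSpace ℝ (Fin d)), ↑Z ⊆ F ∩ ball x₀ r' →
        (∀ z ∈ Z, ∀ z' ∈ Z, z ≠ z' → δ ≤ dist z z') → Z.card ≤ M := by
      intro Z h1 h2
      apply Nat.le_floor
      rw [le_div_iff₀ (by positivity)]
      exact hsepcard Z h1 h2
    obtain ⟨Z, hZS, hZsep, hZcover⟩ := exists_maximal_net (F ∩ ball x₀ r') δ hδpos M hM
    -- the thin set Ξ ∩ ball p (r'/4) is covered by the balls of radius 2δ around Z
    have hcover : Ξ ∩ ball p (r' / 4) ⊆ ⋃ z ∈ Z, ball z (2 * δ) := by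
      rintro y ⟨hyΞ, hyp⟩
      have hinf := hcon y ⟨hyΞ, hyp⟩
      obtain ⟨w, hwF, hwy⟩ := (Metric.infDist_lt_iff hFne).1 hinf
      have hwS : w ∈ F ∩ ball x₀ r' := by
        refine ⟨hwF, ?_⟩
        rw [mem_ball] at hyp ⊢
        have htri := dist_triangle4 w y p x₀
        calc dist w x₀ ≤ dist w y + dist y p + dist p x₀ := htri
          _ < r' := by
              have h1 : dist w y < δ := by rw [dist_comm]; exact hwy
              have h2 : dist p x₀ < r' / 4 := by rw [dist_comm]; exact hpx₀
              have h3 : dist y p < r' / 4 := hyp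
              linarith
      obtain ⟨z, hzZ, hwz⟩ := hZcover w hwS
      refine mem_biUnion hzZ ?_
      rw [mem_ball]
      calc dist y z ≤ dist y w + dist w z := dist_triangle y w z
        _ < 2 * δ := by linarith
    -- measure comparison
    have hr41 : r' / 4 ≤ 1 := by linarith
    have hlow := (hAhlfors p hpΞ (r' / 4) (by positivity) hr41).1
    have hup : volume (Ξ ∩ ball p (r' / 4)) ≤
        (Z.card : ENNReal) * ENNReal.ofReal ((2 * δ) ^ d * ω) := by
      calc volume (Ξ ∩ ball p (r' / 4)) ≤ volume (⋃ z ∈ Z, ball z (2 * δ)) :=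
            measure_mono hcover
        _ ≤ ∑ z ∈ Z, volume (ball z (2 * δ)) := measure_biUnion_finset_le Z _
        _ = ∑ _z ∈ Z, ENNReal.ofReal ((2 * δ) ^ d * ω) := by
            exact Finset.sum_congr rfl fun z _ => hvol z (2 * δ) (by positivity)
        _ = (Z.card : ENNReal) * ENNReal.ofReal ((2 * δ) ^ d * ω) := by
            rw [Finset.sum_const, nsmul_eq_mul]
    have hAll : c₁ * (r' / 4) ^ d ≤ (Z.card : ℝ) * ((2 * δ) ^ d * ω) := by
      have hle : ENNReal.ofReal (c₁ * (r' / 4) ^ d) ≤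
          ENNReal.ofReal ((Z.card : ℝ) * ((2 * δ) ^ d * ω)) := by
        rw [ENNReal.ofReal_mul (Nat.cast_nonneg _), ENNReal.ofReal_natCast]
        exact hlow.trans hup
      exact (ENNReal.ofReal_le_ofReal_iff
        (mul_nonneg (Nat.cast_nonneg _) (mul_nonneg (by positivity) hω.le))).1 hle
    have hcard := hsepcard Z hZS hZsep
    -- rpow manipulations
    set N : ℝ := (Z.card : ℝ) with hNdef
    have hN : 0 ≤ N := Nat.cast_nonneg _
    have eA : (δ / 2) ^ e = (κ₀ / 8) ^ e * (4 * r') ^ e := by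
      rw [← Real.mul_rpow (by positivity) (by positivity)]
      congr 1
      rw [hδdef]; ring
    have eB : ((2 * δ) : ℝ) ^ d = (8 * κ₀) ^ d * (r' / 4) ^ d := by
      rw [← mul_pow]
      congr 1
      rw [hδdef]; ring
    have eC : ((8 * κ₀) : ℝ) ^ d = (2 : ℝ) ^ (6 * d) / 64 * (κ₀ / 8) ^ e * (8 * κ₀) := by
      have hde : ((d : ℝ)) = e + 1 := by rw [hedef]; ring
      rw [← Real.rpow_natCast (8 * κ₀) d, hde, Real.rpow_add (by positivity), Real.rpow_one]
      congr 1
      have h8κ : (8 * κ₀ : ℝ) = 64 * (κ₀ / 8) := by ring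
      rw [h8κ, Real.mul_rpow (by norm_num) (by positivity)]
      congr 1
      have h64 : (64 : ℝ) = (2 : ℝ) ^ (6 : ℕ) := by norm_num
      rw [h64, ← Real.rpow_natCast (2 : ℝ) 6, ← Real.rpow_mul (by norm_num),
        ← Real.rpow_natCast (2 : ℝ) (6 * d), ← Real.rpow_sub (by norm_num : (0:ℝ) < 2)]
      congr 1
      rw [hedef]
      push_cast
      ring
    -- final arithmetic contradiction
    set q : ℝ := (2 : ℝ) ^ (6 * d) with hqdef
    have hqpos : 0 < q := by rw [hqdef]; positivity
    set P : ℝ := (κ₀ / 8) ^ e with hPdef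
    have hP : 0 < P := Real.rpow_pos_of_pos (by positivity) _
    set Bq : ℝ := (4 * r') ^ e with hBqdef
    have hBq : 0 < Bq := Real.rpow_pos_of_pos (by positivity) _
    set Rq : ℝ := (r' / 4) ^ d with hRqdef
    have hRq : 0 < Rq := by positivity
    -- rewrite hAll and hcard
    rw [eB, eC] at hAll
    rw [eA] at hcard
    clear_value N q P Bq Rq
    -- hAll : c₁ * Rq ≤ N * ((2^(6d)/64 * P * (8κ₀)) * Rq * ω)
    -- hcard : N * (b₁ * (P * Bq)) ≤ b₂ * Bq
    have h2c : N * b₁ * P ≤ b₂ := by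
      have h := hcard
      rw [show N * (b₁ * (P * Bq)) = N * b₁ * P * Bq from by ring] at h
      exact le_of_mul_le_mul_right h hBq
    have h1c : c₁ ≤ N * P * κ₀ * ω * q / 8 := by
      have h := hAll
      rw [show N * (q / 64 * P * (8 * κ₀) * Rq * ω) =
        (N * P * κ₀ * ω * q / 8) * Rq from by ring] at h
      calc c₁ = c₁ * Rq / Rq := (mul_div_cancel_right₀ _ hRq.ne').symm
        _ ≤ (N * P * κ₀ * ω * q / 8) * Rq / Rq := by gcongr
        _ = N * P * κ₀ * ω * q / 8 := mul_div_cancel_right₀ _ hRq.ne'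
    have h3 : κ₀ * (b₂ * ω * q) ≤ c₁ * b₁ := by
      rw [← le_div_iff₀ hden]
      exact hκ₀small
    nlinarith [mul_le_mul_of_nonneg_right h1c hb₁.le,
      mul_le_mul_of_nonneg_right h2c
        (le_of_lt (by positivity : (0 : ℝ) < κ₀ * ω * q / 8)),
      mul_pos hc₁ hb₁]
  -- conclusion
  obtain ⟨x, ⟨hxΞ, hxp⟩, hxdist⟩ := key
  have hballF : ∀ y ∈ ball x δ, y ∉ F := by
    intro y hy hyF
    rw [mem_ball] at hy
    have := Metric.infDist_le_dist_of_mem (x := x) hyF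
    rw [dist_comm] at hy
    linarith
  have hballΞ : ball x δ ⊆ Ξ := ball_subset_of_avoids_frontier Ξ hΞopen hxΞ hballF
  refine ⟨x, hxΞ, fun y hy => ?_⟩
  rw [mem_ball] at hy
  have hyδ : y ∈ ball x δ := mem_ball.2 (lt_of_lt_of_le hy hκr)
  refine ⟨hballΞ hyδ, ?_⟩
  rw [mem_ball] at hxp ⊢
  have hyx : dist y x < δ := mem_ball.1 hyδ
  calc dist y x₀ ≤ dist y x + dist x p + dist p x₀ := dist_triangle4 y x p x₀
    _ < r' := by
        have h2 : dist p x₀ < r' / 4 := by rw [dist_comm]; exact hpx₀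
        linarith
    _ ≤ r := hr'r
end

section
/- Let d ≥ 1, let Ω ⊆ ℝ^d be open with ∂Ω a (d−1)-set, and let δ ∈ (0,1), C₁, Ĉ₂, η̂, c > 0. Set η := min{1, η̂}. Then there exists C₂ > 0, depending only on d, δ, C₁, Ĉ₂, η̂, c and the (d−1)-set constants of ∂Ω, such that the following holds: for every k ∈ ℕ and every nonempty measurable set Q ⊆ Ω with diam(Q) ≤ C₁ δ^k, |Q| ≥ c δ^{kd}, and |{x ∈ Q : dist(x, Ω ∖ Q) ≤ t δ^k}| ≤ Ĉ₂ t^{η̂} |Q| for all t > 0, one has |{x ∈ Q : dist(x, ℝ^d ∖ Q) ≤ t δ^k}| ≤ C₂ t^{η} |Q| for all t > 0. -/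
/-!
Write `ε = t δ^k` and split the strip of `Q` along `Qᶜ = (Ω \ Q) ∪ Ωᶜ`. The part near `Ω \ Q` is
controlled by hypothesis (6), and `t ^ η̂ ≤ t ^ η` for `t < 1`. Every point `x` of the part near
`Ωᶜ` has a point `y ∈ ∂Ω` within `ε`, and the lower `(d-1)`-regularity puts mass `≳ ε^(d-1)` of
`∂Ω ∩ B(y, ε) ⊆ B(x, 2ε)`. Integrating over `x` and swapping the order of integration gives
`ε^(d-1) |S| ≲ ε^d · m_{d-1}(∂Ω ∩ B(z, (C₁ + 3) δ^k)) ≲ ε^d δ^(k(d-1))`, i.e. `|S| ≲ t δ^(kd) ≲ t |Q|`;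
the upper bound at the possibly large scale `(C₁ + 3) δ^k` comes from covering by unit balls.
For `t ≥ 1` the bound is trivial once `C₂ ≥ 1`.
-/

open MeasureTheory Metric Set

section Regularity

variable {X : Type*} [PseudoMetricSpace X] [MeasurableSpace X]

/-- With `μ = μH[s]`, `Γ` is an `s`-set with constants `b₁ ≤ b₂` exactly when it is
`LowerRegularUpTo μ Γ s b₁ 1` and `UpperRegularUpTo μ Γ s b₂ 1`. -/
def UpperRegularUpTo (μ : Measure X) (Γ : Set X) (s C R : ℝ) : Prop :=
  ∀ x ∈ Γ, ∀ r : ℝ, 0 < r → r ≤ R → μ (Γ ∩ ball x r) ≤ ENNReal.ofReal (C * r ^ s)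

def LowerRegularUpTo (μ : Measure X) (Γ : Set X) (s C R : ℝ) : Prop :=
  ∀ x ∈ Γ, ∀ r : ℝ, 0 < r → r ≤ R → ENNReal.ofReal (C * r ^ s) ≤ μ (Γ ∩ ball x r)

end Regularity

section Covering

variable {E : Type*} [SeminormedAddCommGroup E] [ProperSpace E] [MeasurableSpace E]

theorem exists_forall_measure_inter_ball_le (μ : Measure E) {Γ : Set E} {M : ENNReal}
    (h : ∀ y ∈ Γ, μ (Γ ∩ ball y 1) ≤ M) (R : ℝ) :
    ∃ N : ℕ, ∀ z, μ (Γ ∩ ball z R) ≤ N * M := by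
  obtain ⟨t, -, ht, hcover⟩ :=
    finite_cover_balls_of_compact (isCompact_closedBall (0 : E) R) (by norm_num : (0 : ℝ) < 1 / 2)
  refine ⟨ht.toFinset.card, fun z => ?_⟩
  have hsub : Γ ∩ ball z R ⊆ ⋃ i ∈ ht.toFinset, Γ ∩ ball (z + i) (1 / 2) := by
    rintro w ⟨hwΓ, hw⟩
    have hw' : w - z ∈ closedBall 0 R := by
      simpa [dist_eq_norm] using (mem_ball.1 hw).le
    obtain ⟨i, hi, hwi⟩ := mem_iUnion₂.1 (hcover hw')
    refine mem_iUnion₂.2 ⟨i, ht.mem_toFinset.2 hi, hwΓ, ?_⟩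
    rw [mem_ball, dist_eq_norm, ← sub_sub]
    rwa [mem_ball, dist_eq_norm] at hwi
  have hpiece : ∀ i, μ (Γ ∩ ball (z + i) (1 / 2)) ≤ M := by
    intro i
    rcases (Γ ∩ ball (z + i) (1 / 2)).eq_empty_or_nonempty with hempty | ⟨y, hyΓ, hy⟩
    · simp only [hempty, measure_empty, zero_le]
    · refine (measure_mono (inter_subset_inter_right _ (ball_subset_ball' ?_))).trans (h y hyΓ)
      linarith [mem_ball'.1 hy]
  calc μ (Γ ∩ ball z R) ≤ ∑ i ∈ ht.toFinset, μ (Γ ∩ ball (z + i) (1 / 2)) :=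
        (measure_mono hsub).trans (measure_biUnion_finset_le _ _)
    _ ≤ ht.toFinset.card * M := by simpa using Finset.sum_le_sum fun i _ => hpiece i

theorem UpperRegularUpTo.extend_scale {μ : Measure E} {Γ : Set E} {s C : ℝ}
    (h : UpperRegularUpTo μ Γ s C 1) (hs : 0 ≤ s) (hC : 0 ≤ C) (R : ℝ) :
    ∃ K ≥ 0, UpperRegularUpTo μ Γ s K R := by
  obtain ⟨N, hN⟩ := exists_forall_measure_inter_ball_le μ (M := ENNReal.ofReal C)
    (fun y hy => (h y hy 1 one_pos le_rfl).trans_eq (by simp)) R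
  refine ⟨(N + 1) * C, by positivity, fun x _ r hr0 hrR => ?_⟩
  have hrs : 0 ≤ r ^ s := by positivity
  rcases le_or_gt r 1 with hr1 | hr1
  · refine (h x ‹_› r hr0 hr1).trans (ENNReal.ofReal_le_ofReal ?_)
    nlinarith [mul_nonneg (mul_nonneg (N.cast_nonneg : (0 : ℝ) ≤ N) hC) hrs]
  · calc μ (Γ ∩ ball x r) ≤ N * ENNReal.ofReal C :=
          (measure_mono (inter_subset_inter_right _ (ball_subset_ball hrR))).trans (hN x)
      _ = ENNReal.ofReal (N * C) := by rw [ENNReal.ofReal_mul (by positivity), ENNReal.ofReal_natCast]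
      _ ≤ ENNReal.ofReal ((N + 1) * C * r ^ s) := by
          refine ENNReal.ofReal_le_ofReal ?_
          have hNC : 0 ≤ (N + 1) * C := by positivity
          nlinarith [mul_le_mul_of_nonneg_left (Real.one_le_rpow hr1.le hs) hNC]

end Covering

section Fubini

variable {X : Type*} [PseudoMetricSpace X] [SecondCountableTopology X] [MeasurableSpace X]
  [OpensMeasurableSpace X]

theorem measurableSet_dist_lt (r : ℝ) : MeasurableSet {p : X × X | dist p.2 p.1 < r} :=
  (isOpen_lt (by fun_prop) continuous_const).measurableSet

theorem measurable_measure_ball (ν : Measure X) [SFinite ν] (r : ℝ) :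
    Measurable fun x => ν (ball x r) :=
  measurable_measure_prodMk_left (measurableSet_dist_lt r)

theorem lintegral_measure_ball_comm (μ ν : Measure X) [SFinite μ] [SFinite ν] (r : ℝ) :
    ∫⁻ x, ν (ball x r) ∂μ = ∫⁻ y, μ (ball y r) ∂ν :=
  calc ∫⁻ x, ν (ball x r) ∂μ = μ.prod ν {p : X × X | dist p.2 p.1 < r} :=
        (Measure.prod_apply (measurableSet_dist_lt r)).symm
    _ = ∫⁻ y, μ (ball y r) ∂ν := by
        rw [Measure.prod_apply_symm (measurableSet_dist_lt r)]
        refine lintegral_congr fun y => congrArg μ (ext fun x => ?_)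
        simp [dist_comm]

end Fubini

theorem mul_measure_le_of_le_measure_ball {E : Type*} [NormedAddCommGroup E] [MeasurableSpace E]
    [BorelSpace E] [SecondCountableTopology E] (μ : Measure E) [μ.IsAddHaarMeasure] [SFinite μ]
    (ν : Measure E) [SFinite ν] {S : Set E} {a : ENNReal} {r : ℝ}
    (h : ∀ x ∈ S, a ≤ ν (ball x r)) : a * μ S ≤ μ (ball 0 r) * ν univ :=
  calc a * μ S = ∫⁻ _ in S, a ∂μ := (setLIntegral_const S a).symm
    _ ≤ ∫⁻ x in S, ν (ball x r) ∂μ := setLIntegral_mono (measurable_measure_ball ν r) h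
    _ ≤ ∫⁻ x, ν (ball x r) ∂μ := setLIntegral_le_lintegral S _
    _ = ∫⁻ y, μ (ball y r) ∂ν := lintegral_measure_ball_comm μ ν r
    _ = μ (ball 0 r) * ν univ := by
        simp_rw [Measure.addHaar_ball_center μ]
        exact lintegral_const _

theorem exists_mem_frontier_dist_le_of_infEDist_compl_le_s3 {E : Type*} [NormedAddCommGroup E]
    [NormedSpace ℝ E] [FiniteDimensional ℝ E] {Ω : Set E} {x : E} {ε : ℝ} (hx : x ∈ Ω)
    (hε : 0 ≤ ε) (h : Metric.infEDist x Ωᶜ ≤ ENNReal.ofReal ε) :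
    ∃ y ∈ frontier Ω, dist x y ≤ ε := by
  have hΩ : Ω ≠ univ := by
    rintro rfl
    simp at h
  obtain ⟨y, hy, hdist⟩ := exists_mem_frontier_infDist_compl_eq_dist hx hΩ
  exact ⟨y, hy, hdist ▸ ENNReal.toReal_le_of_le_ofReal hε h⟩

theorem sep_infEDist_compl_subset_union {X : Type*} [PseudoEMetricSpace X] {Ω Q : Set X}
    (hQΩ : Q ⊆ Ω) (r : ENNReal) :
    {x ∈ Q | Metric.infEDist x Qᶜ ≤ r} ⊆
      {x ∈ Q | Metric.infEDist x (Ω \ Q) ≤ r} ∪ {x ∈ Q | Metric.infEDist x Ωᶜ ≤ r} := by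
  have hcompl : Qᶜ = (Ω \ Q) ∪ Ωᶜ := by
    ext x
    have := @hQΩ x
    simp only [mem_compl_iff, mem_union, mem_sdiff]
    tauto
  rintro x ⟨hxQ, hx⟩
  rw [hcompl, Metric.infEDist_union, min_le_iff] at hx
  exact hx.imp (⟨hxQ, ·⟩) (⟨hxQ, ·⟩)

section Euclidean

variable {d : ℕ}

local notation "E" => EuclideanSpace ℝ (Fin d)

theorem volume_le_of_forall_near_lowerRegular {Γ S : Set E} {b₁ ε M R : ℝ} {z : E}
    (hlow : LowerRegularUpTo μH[(d : ℝ) - 1] Γ ((d : ℝ) - 1) b₁ 1) (hb₁ : 0 < b₁)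
    (hε0 : 0 < ε) (hε1 : ε ≤ 1) (hM : μH[(d : ℝ) - 1] (Γ ∩ ball z R) ≤ ENNReal.ofReal M)
    (hS : ∀ x ∈ S, ∃ y ∈ Γ, dist x y ≤ ε ∧ ball y ε ⊆ ball z R) :
    volume S ≤ ENNReal.ofReal (2 ^ d * volume.real (ball (0 : E) 1) * M / b₁ * ε) := by
  set ν := μH[(d : ℝ) - 1].restrict (Γ ∩ ball z R)
  have : IsFiniteMeasure ν := isFiniteMeasure_restrict.2 (hM.trans_lt ENNReal.ofReal_lt_top).ne
  have hν : ∀ x ∈ S, ENNReal.ofReal (b₁ * ε ^ ((d : ℝ) - 1)) ≤ ν (ball x (2 * ε)) := by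
    intro x hx
    obtain ⟨y, hyΓ, hxy, hyz⟩ := hS x hx
    refine (hlow y hyΓ ε hε0 hε1).trans ?_
    rw [Measure.restrict_apply measurableSet_ball]
    refine measure_mono fun w hw => ⟨?_, hw.1, hyz hw.2⟩
    exact mem_ball.2 (by linarith [dist_triangle w y x, dist_comm y x, mem_ball.1 hw.2])
  have key := mul_measure_le_of_le_measure_ball volume ν hν
  rw [Measure.restrict_apply_univ, Measure.addHaar_ball_of_pos _ _ (by positivity),
    finrank_euclideanSpace_fin, ← ofReal_measureReal (μ := volume) (s := ball (0 : E) 1)] at key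
  have hpos : 0 < b₁ * ε ^ ((d : ℝ) - 1) := by positivity
  rw [← ENNReal.mul_le_mul_iff_right (ENNReal.ofReal_pos.2 hpos).ne' ENNReal.ofReal_ne_top]
  refine key.trans ((mul_le_mul_right hM _).trans_eq ?_)
  rw [← ENNReal.ofReal_mul (by positivity), ← ENNReal.ofReal_mul (by positivity),
    ← ENNReal.ofReal_mul hpos.le]
  congr 1
  rw [Real.rpow_sub_one hε0.ne', Real.rpow_natCast]
  field_simp
  ring

theorem volume_sep_infEDist_compl_le {Ω Q : Set E} {b₁ K C₁ r t : ℝ}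
    (hlow : LowerRegularUpTo μH[(d : ℝ) - 1] (frontier Ω) ((d : ℝ) - 1) b₁ 1) (hb₁ : 0 < b₁)
    (hup : UpperRegularUpTo μH[(d : ℝ) - 1] (frontier Ω) ((d : ℝ) - 1) K (C₁ + 3))
    (hQΩ : Q ⊆ Ω) (hC₁ : 0 ≤ C₁) (hdiam : Metric.ediam Q ≤ ENNReal.ofReal (C₁ * r))
    (ht0 : 0 < t) (ht1 : t ≤ 1) (hr0 : 0 < r) (hr1 : r ≤ 1) :
    volume {x ∈ Q | Metric.infEDist x Ωᶜ ≤ ENNReal.ofReal (t * r)} ≤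
      ENNReal.ofReal (2 ^ d * volume.real (ball (0 : E) 1) * K * (C₁ + 3) ^ ((d : ℝ) - 1) / b₁ *
        t * r ^ d) := by
  set ε := t * r
  set S := {x ∈ Q | Metric.infEDist x Ωᶜ ≤ ENNReal.ofReal ε}
  rcases S.eq_empty_or_nonempty with hS | ⟨x₀, hx₀Q, hx₀⟩
  · simp [hS]
  have hε0 : 0 < ε := mul_pos ht0 hr0
  have hεr : ε ≤ r := mul_le_of_le_one_left hr0.le ht1
  have hnear : ∀ x ∈ S, ∃ y ∈ frontier Ω, dist x y ≤ ε := fun x hx =>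
    exists_mem_frontier_dist_le_of_infEDist_compl_le_s3 (hQΩ hx.1) hε0.le hx.2
  obtain ⟨z, hz, hx₀z⟩ := hnear x₀ ⟨hx₀Q, hx₀⟩
  have hQ : ∀ x ∈ Q, dist x x₀ ≤ C₁ * r := fun x hx =>
    (edist_le_ofReal (by positivity)).1 ((Metric.edist_le_ediam_of_mem hx hx₀Q).trans hdiam)
  have hball : ∀ x ∈ S, ∃ y ∈ frontier Ω, dist x y ≤ ε ∧ ball y ε ⊆ ball z ((C₁ + 3) * r) := by
    intro x hx
    obtain ⟨y, hy, hxy⟩ := hnear x hx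
    refine ⟨y, hy, hxy, ball_subset_ball' ?_⟩
    linarith [dist_triangle4 y x x₀ z, dist_comm x y, hQ x hx.1]
  have hM := hup z hz ((C₁ + 3) * r) (by positivity) (by nlinarith)
  refine (volume_le_of_forall_near_lowerRegular hlow hb₁ hε0 (hεr.trans hr1) hM hball).trans
    (ENNReal.ofReal_le_ofReal (le_of_eq ?_))
  rw [Real.mul_rpow (by positivity) hr0.le, Real.rpow_sub_one hr0.ne', Real.rpow_natCast]
  field_simp
  ring

end Euclidean

theorem complete_boundary_strip_estimate_general
    (d : ℕ) (hd : 1 ≤ d)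
    (Ω : Set (EuclideanSpace ℝ (Fin d)))
    (b₁ b₂ : ℝ) (hb₁ : 0 < b₁) (hb₁₂ : b₁ ≤ b₂)
    (hAD : ∀ x ∈ frontier Ω, ∀ r : ℝ, 0 < r → r ≤ 1 →
      ENNReal.ofReal (b₁ * r ^ ((d : ℝ) - 1)) ≤ μH[(d : ℝ) - 1] (frontier Ω ∩ ball x r) ∧
        μH[(d : ℝ) - 1] (frontier Ω ∩ ball x r) ≤ ENNReal.ofReal (b₂ * r ^ ((d : ℝ) - 1)))
    (δ C₁ Chat₂ ηhat c : ℝ) (hδ0 : 0 < δ) (hδ1 : δ < 1)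
    (hC₁ : 0 < C₁) (hChat₂ : 0 < Chat₂) (hηhat : 0 < ηhat) (hc : 0 < c) :
    ∃ C₂ > 0, ∀ (k : ℕ) (Q : Set (EuclideanSpace ℝ (Fin d))),
      Q.Nonempty → MeasurableSet Q → Q ⊆ Ω →
      EMetric.diam Q ≤ ENNReal.ofReal (C₁ * δ ^ k) →
      ENNReal.ofReal (c * δ ^ (k * d)) ≤ volume Q →
      (∀ t : ℝ, 0 < t →
        volume {x ∈ Q | EMetric.infEdist x (Ω \ Q) ≤ ENNReal.ofReal (t * δ ^ k)} ≤
          ENNReal.ofReal (Chat₂ * t ^ ηhat) * volume Q) →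
      ∀ t : ℝ, 0 < t →
        volume {x ∈ Q | EMetric.infEdist x Qᶜ ≤ ENNReal.ofReal (t * δ ^ k)} ≤
          ENNReal.ofReal (C₂ * t ^ min 1 ηhat) * volume Q := by
  obtain ⟨K, hK0, hK⟩ := UpperRegularUpTo.extend_scale (fun x hx r h0 h1 => (hAD x hx r h0 h1).2)
    (sub_nonneg.2 (by exact_mod_cast hd)) (hb₁.le.trans hb₁₂) (C₁ + 3)
  set A := 2 ^ d * volume.real (ball (0 : EuclideanSpace ℝ (Fin d)) 1) * K *
    (C₁ + 3) ^ ((d : ℝ) - 1) / b₁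
  refine ⟨max 1 (Chat₂ + A / c), by positivity, fun k Q _ _ hQΩ hdiam hvol h6 t ht => ?_⟩
  rcases le_or_gt 1 t with ht1 | ht1
  · refine (measure_mono (sep_subset _ _)).trans (le_mul_of_one_le_left zero_le ?_)
    exact ENNReal.one_le_ofReal.2 (one_le_mul_of_one_le_of_one_le (le_max_left _ _)
      (Real.one_le_rpow ht1 (by positivity)))
  have hS₁ : volume {x ∈ Q | Metric.infEDist x (Ω \ Q) ≤ ENNReal.ofReal (t * δ ^ k)} ≤
      ENNReal.ofReal (Chat₂ * t ^ min 1 ηhat) * volume Q := by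
    refine (h6 t ht).trans ?_
    gcongr ENNReal.ofReal (_ * ?_) * _
    exact Real.rpow_le_rpow_of_exponent_ge ht ht1.le (min_le_right 1 ηhat)
  have hS₂ : volume {x ∈ Q | Metric.infEDist x Ωᶜ ≤ ENNReal.ofReal (t * δ ^ k)} ≤
      ENNReal.ofReal (A / c * t ^ min 1 ηhat) * volume Q := by
    refine (volume_sep_infEDist_compl_le (fun x hx r h0 h1 => (hAD x hx r h0 h1).1) hb₁ hK hQΩ
      hC₁.le hdiam ht ht1.le (pow_pos hδ0 k) (pow_le_one₀ hδ0.le hδ1.le)).trans ?_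
    rw [← pow_mul]
    calc ENNReal.ofReal (A * t * δ ^ (k * d))
        = ENNReal.ofReal (A / c * t) * ENNReal.ofReal (c * δ ^ (k * d)) := by
          rw [← ENNReal.ofReal_mul (by positivity)]
          congr 1
          field_simp
      _ ≤ _ := by
          gcongr
          simpa using Real.rpow_le_rpow_of_exponent_ge ht ht1.le (min_le_left 1 ηhat)
  calc _ ≤ _ := (measure_mono (sep_infEDist_compl_subset_union hQΩ _)).trans (measure_union_le _ _)
    _ ≤ _ := add_le_add hS₁ hS₂
    _ = ENNReal.ofReal ((Chat₂ + A / c) * t ^ min 1 ηhat) * volume Q := by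
        rw [← add_mul, ← ENNReal.ofReal_add (by positivity) (by positivity), add_mul]
    _ ≤ _ := by gcongr; exact le_max_right _ _

/-- Estimate for the **complete** inner boundary strip of a dyadic cube: if `∂Ω` is a
`(d-1)`-set, then the control of the strip near the relative boundary (property (6) of the
dyadic decomposition) upgrades to control of the strip near the full boundary of `Q`,
with exponent `η = min 1 η̂`. -/
theorem complete_boundary_strip_estimate
    (d : ℕ) (hd : 1 ≤ d)
    (Ω : Set (EuclideanSpace ℝ (Fin d))) (hΩopen : IsOpen Ω)
    (b₁ b₂ : ℝ) (hb₁ : 0 < b₁) (hb₁₂ : b₁ ≤ b₂)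
    (hAD : ∀ x ∈ frontier Ω, ∀ r : ℝ, 0 < r → r ≤ 1 →
      ENNReal.ofReal (b₁ * r ^ ((d : ℝ) - 1)) ≤ μH[(d : ℝ) - 1] (frontier Ω ∩ ball x r) ∧
        μH[(d : ℝ) - 1] (frontier Ω ∩ ball x r) ≤ ENNReal.ofReal (b₂ * r ^ ((d : ℝ) - 1)))
    (δ C₁ Chat₂ ηhat c : ℝ) (hδ0 : 0 < δ) (hδ1 : δ < 1)
    (hC₁ : 0 < C₁) (hChat₂ : 0 < Chat₂) (hηhat : 0 < ηhat) (hc : 0 < c) :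
    ∃ C₂ > 0, ∀ (k : ℕ) (Q : Set (EuclideanSpace ℝ (Fin d))),
      Q.Nonempty → MeasurableSet Q → Q ⊆ Ω →
      EMetric.diam Q ≤ ENNReal.ofReal (C₁ * δ ^ k) →
      ENNReal.ofReal (c * δ ^ (k * d)) ≤ volume Q →
      (∀ t : ℝ, 0 < t →
        volume {x ∈ Q | EMetric.infEdist x (Ω \ Q) ≤ ENNReal.ofReal (t * δ ^ k)} ≤
          ENNReal.ofReal (Chat₂ * t ^ ηhat) * volume Q) →
      ∀ t : ℝ, 0 < t →
        volume {x ∈ Q | EMetric.infEdist x Qᶜ ≤ ENNReal.ofReal (t * δ ^ k)} ≤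
          ENNReal.ofReal (C₂ * t ^ min 1 ηhat) * volume Q :=
  complete_boundary_strip_estimate_general d hd Ω b₁ b₂ hb₁ hb₁₂ hAD δ C₁ Chat₂ ηhat c hδ0 hδ1 hC₁
    hChat₂ hηhat hc
end

section
/- Let d ≥ 1, let Ω ⊆ ℝ^d satisfy the d-Ahlfors condition, let δ ∈ (0,1), a₀ ∈ (0,1], C₁ > 0 and k ∈ ℕ, and let Δ be a countable collection of pairwise disjoint open subsets of Ω such that every R ∈ Δ has diam(R) ≤ C₁ δ^k and contains B(z_R, a₀ δ^k) ∩ Ω for some z_R ∈ Ω. Let t ∈ (δ^{k+1}, δ^k]. Then for every M > d+1 there exists c_M > 0, depending only on d, M, δ, a₀, C₁ and the d-Ahlfors constants of Ω, such that ∑_{R ∈ Δ} ⟨dist(x,R)/t⟩^{−M} ≤ c_M for every x ∈ ℝ^d. -/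
open MeasureTheory Metric Set
open Function Module
open scoped ENNReal NNReal

/-!
Sort the cubes by their level `n = ⌊dist(x, R) / t⌋₊`. Since `δ^k < t / δ`, every cube has
diameter at most `(C₁ / δ) t` and, by the lower Ahlfors bound, volume at least `c₁ (a₀ t)^d`.
The cubes of level `n` are therefore disjoint subsets of the ball of radius `(n + 1)(1 + C₁ / δ) t`
around `x`, so there are at most `K (n + 1)^d` of them with `K` independent of `t`, and each
has weight at most `(n + 1)^(-M)`. Summing over `n` gives `K ∑ (n + 1)^(d - M) < ∞`.
-/

theorem ENNReal.tsum_natCast_add_one_rpow_ne_top {p : ℝ} (hp : p < -1) :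
    ∑' n : ℕ, ((n : ℝ≥0∞) + 1) ^ p ≠ ∞ := by
  have hsum : Summable fun n : ℕ => ((n + 1 : ℕ) : ℝ≥0) ^ p :=
    (NNReal.summable_nat_add_iff 1).2 (NNReal.summable_rpow.2 hp)
  convert ENNReal.tsum_coe_ne_top_iff_summable.2 hsum using 3 with n
  rw [ENNReal.coe_rpow_of_ne_zero (by positivity)]
  push_cast
  rfl

theorem ENNReal.exists_pos_le_ofReal {a : ℝ≥0∞} (ha : a ≠ ∞) : ∃ c > 0, a ≤ ENNReal.ofReal c :=
  ⟨a.toReal + 1, by positivity,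
    (ENNReal.ofReal_toReal ha).ge.trans (ENNReal.ofReal_le_ofReal (by linarith))⟩

theorem ENNReal.tsum_le_tsum_of_fiber_sum_le {ι κ : Type*} (f : ι → ℝ≥0∞) (g : ι → κ)
    (b : κ → ℝ≥0∞) (h : ∀ n (F : Finset ι), (∀ i ∈ F, g i = n) → ∑ i ∈ F, f i ≤ b n) :
    ∑' i, f i ≤ ∑' n, b n := by
  rw [← ENNReal.tsum_fiberwise f g]
  refine ENNReal.tsum_le_tsum fun n => ?_
  rw [ENNReal.tsum_eq_iSup_sum]
  refine iSup_le fun F => ?_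
  simpa only [Finset.sum_map, Embedding.subtype_apply] using
    h n (F.map (Embedding.subtype _)) fun i hi => by
      obtain ⟨j, -, rfl⟩ := Finset.mem_map.1 hi
      exact j.2

theorem Finset.card_mul_le_measure_of_pairwiseDisjoint {α ι : Type*} [MeasurableSpace α]
    (μ : Measure α) {F : Finset ι} {s : ι → Set α} {S : Set α} {v : ℝ≥0∞}
    (hdisj : (F : Set ι).PairwiseDisjoint s) (hmeas : ∀ i ∈ F, MeasurableSet (s i))
    (hv : ∀ i ∈ F, v ≤ μ (s i)) (hS : ∀ i ∈ F, s i ⊆ S) :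
    F.card * v ≤ μ S :=
  calc F.card * v = ∑ _i ∈ F, v := by rw [Finset.sum_const, nsmul_eq_mul]
    _ ≤ ∑ i ∈ F, μ (s i) := Finset.sum_le_sum hv
    _ = μ (⋃ i ∈ F, s i) := (measure_biUnion_finset hdisj hmeas).symm
    _ ≤ μ S := measure_mono (iUnion₂_subset hS)

theorem ofReal_mul_pow_le_measure_of_ball_inter_subset {X : Type*} [PseudoMetricSpace X]
    [MeasurableSpace X] {μ : Measure X} {Ω R : Set X} {c r ρ : ℝ} {n : ℕ}
    (hlower : ∀ x ∈ Ω, ∀ r : ℝ, 0 < r → r ≤ 1 → ENNReal.ofReal (c * r ^ n) ≤ μ (Ω ∩ ball x r))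
    (hc : 0 ≤ c) {z : X} (hz : z ∈ Ω) (hr : 0 < r) (hrρ : r ≤ ρ) (hρ : ρ ≤ 1)
    (hR : ball z ρ ∩ Ω ⊆ R) : ENNReal.ofReal (c * r ^ n) ≤ μ R :=
  calc ENNReal.ofReal (c * r ^ n) ≤ ENNReal.ofReal (c * ρ ^ n) := by gcongr
    _ ≤ μ (Ω ∩ ball z ρ) := hlower z hz ρ (hr.trans_le hrρ) hρ
    _ ≤ μ R := measure_mono (by rwa [inter_comm])

theorem Metric.subset_closedBall_of_infDist_lt {X : Type*} [PseudoMetricSpace X] {x : X}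
    {s : Set X} {r D : ℝ} (hr : infDist x s < r) (hD : ediam s ≤ ENNReal.ofReal D)
    (hD0 : 0 ≤ D) : s ⊆ closedBall x (r + D) := by
  intro y hy
  have hbdd : Bornology.IsBounded s :=
    isBounded_iff_ediam_ne_top.2 (ne_top_of_le_ne_top ENNReal.ofReal_ne_top hD)
  have hdiam : diam s ≤ D := ENNReal.toReal_le_of_le_ofReal hD0 hD
  rw [mem_closedBall, dist_comm]
  linarith [dist_le_infDist_add_diam (x := x) hbdd hy]

theorem Metric.one_add_infEDist_div_rpow_neg_le {X : Type*} [PseudoMetricSpace X] {x : X}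
    {s : Set X} (hs : s.Nonempty) {t M : ℝ} (ht : 0 < t) (hM : 0 ≤ M) :
    (1 + infEDist x s / ENNReal.ofReal t) ^ (-M) ≤
      ((⌊infDist x s / t⌋₊ : ℝ≥0∞) + 1) ^ (-M) := by
  have hfloor : (⌊infDist x s / t⌋₊ : ℝ≥0∞) ≤ infEDist x s / ENNReal.ofReal t := by
    rw [← ENNReal.ofReal_toReal (infEDist_ne_top hs), ← ENNReal.ofReal_div_of_pos ht,
      ← ENNReal.ofReal_natCast]
    exact ENNReal.ofReal_le_ofReal (Nat.floor_le (div_nonneg infDist_nonneg ht.le))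
  rw [ENNReal.rpow_neg, ENNReal.rpow_neg, add_comm 1]
  gcongr

section AddHaar

variable {E : Type*} [NormedAddCommGroup E] [NormedSpace ℝ E] [MeasurableSpace E] [BorelSpace E]
  [FiniteDimensional ℝ E] (μ : Measure E) [μ.IsAddHaarMeasure]

theorem Finset.card_le_of_pairwiseDisjoint_subset_closedBall {ι : Type*} {F : Finset ι}
    {s : ι → Set E} {x : E} {c r ρ : ℝ} (hc : 0 < c) (hr : 0 < r) (hρ : 0 ≤ ρ)
    (hdisj : (F : Set ι).PairwiseDisjoint s) (hmeas : ∀ i ∈ F, MeasurableSet (s i))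
    (hvol : ∀ i ∈ F, ENNReal.ofReal (c * r ^ finrank ℝ E) ≤ μ (s i))
    (hsub : ∀ i ∈ F, s i ⊆ closedBall x ρ) :
    (F.card : ℝ≥0∞) ≤ ENNReal.ofReal ((ρ / r) ^ finrank ℝ E / c) * μ (ball 0 1) := by
  have h := F.card_mul_le_measure_of_pairwiseDisjoint μ hdisj hmeas hvol hsub
  have hρr : ρ ^ finrank ℝ E = c * r ^ finrank ℝ E * ((ρ / r) ^ finrank ℝ E / c) := by
    rw [div_pow]
    field_simp
  rw [μ.addHaar_closedBall x hρ, hρr, ENNReal.ofReal_mul (p := c * _) (by positivity),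
    mul_assoc, mul_comm (F.card : ℝ≥0∞)] at h
  exact (ENNReal.mul_le_mul_iff_right (by simp; positivity) ENNReal.ofReal_ne_top).1 h

theorem tsum_one_add_infEDist_div_rpow_neg_le {ι : Type*} {s : ι → Set E}
    (hdisj : Pairwise (Disjoint on s)) (hmeas : ∀ i, MeasurableSet (s i)) {c a b t M : ℝ}
    (hc : 0 < c) (ha : 0 < a) (hb : 0 ≤ b) (ht : 0 < t) (hM : 0 ≤ M)
    (hvol : ∀ i, ENNReal.ofReal (c * (a * t) ^ finrank ℝ E) ≤ μ (s i))
    (hdiam : ∀ i, ediam (s i) ≤ ENNReal.ofReal (b * t)) (x : E) :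
    ∑' i, (1 + infEDist x (s i) / ENNReal.ofReal t) ^ (-M) ≤
      ENNReal.ofReal (((1 + b) / a) ^ finrank ℝ E / c) * μ (ball 0 1) *
        ∑' n : ℕ, ((n : ℝ≥0∞) + 1) ^ ((finrank ℝ E : ℝ) - M) := by
  set K := ENNReal.ofReal (((1 + b) / a) ^ finrank ℝ E / c) * μ (ball 0 1)
  rw [← ENNReal.tsum_mul_left]
  refine ENNReal.tsum_le_tsum_of_fiber_sum_le _ (fun i => ⌊infDist x (s i) / t⌋₊) _
    fun n F hF => ?_
  have hne : ∀ i, (s i).Nonempty := fun i => nonempty_of_measure_ne_zero (μ := μ)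
    ((ENNReal.ofReal_pos.2 (by positivity)).trans_le (hvol i)).ne'
  have hsub : ∀ i ∈ F, s i ⊆ closedBall x ((n + 1) * (1 + b) * t) := by
    intro i hi
    have hlt : infDist x (s i) < (n + 1) * t := by
      rw [← div_lt_iff₀ ht, ← hF i hi]
      exact Nat.lt_floor_add_one _
    refine (subset_closedBall_of_infDist_lt hlt (hdiam i) (by positivity)).trans
      (closedBall_subset_closedBall ?_)
    have : 0 ≤ n * b * t := by positivity
    linarith
  have hcard := F.card_le_of_pairwiseDisjoint_subset_closedBall μ hc (mul_pos ha ht)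
    (by positivity) (hdisj.set_pairwise _) (fun i _ => hmeas i) (fun i _ => hvol i) hsub
  have hratio : ENNReal.ofReal (((n + 1) * (1 + b) * t / (a * t)) ^ finrank ℝ E / c) =
      ((n : ℝ≥0∞) + 1) ^ finrank ℝ E * ENNReal.ofReal (((1 + b) / a) ^ finrank ℝ E / c) := by
    rw [← ENNReal.ofReal_natCast, ← ENNReal.ofReal_one,
      ← ENNReal.ofReal_add (by positivity) zero_le_one, ← ENNReal.ofReal_pow (by positivity),
      ← ENNReal.ofReal_mul (by positivity)]
    have hscale : (n + 1) * (1 + b) * t / (a * t) = (n + 1) * ((1 + b) / a) := by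
      field_simp
    rw [hscale, mul_pow, mul_div_assoc]
  rw [hratio, mul_assoc] at hcard
  calc ∑ i ∈ F, (1 + infEDist x (s i) / ENNReal.ofReal t) ^ (-M)
      ≤ ∑ _i ∈ F, ((n : ℝ≥0∞) + 1) ^ (-M) := Finset.sum_le_sum fun i hi =>
        hF i hi ▸ one_add_infEDist_div_rpow_neg_le (hne i) ht hM
    _ = F.card * ((n : ℝ≥0∞) + 1) ^ (-M) := by rw [Finset.sum_const, nsmul_eq_mul]
    _ ≤ ((n : ℝ≥0∞) + 1) ^ finrank ℝ E * K * ((n : ℝ≥0∞) + 1) ^ (-M) := by gcongr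
    _ = K * ((n : ℝ≥0∞) + 1) ^ ((finrank ℝ E : ℝ) - M) := by
      rw [sub_eq_add_neg, ENNReal.rpow_add _ _ (by positivity) (by simp), ENNReal.rpow_natCast]
      ring

end AddHaar

theorem sum_offdiagonal_weights_bounded_general
    (d : ℕ)
    (Ω : Set (EuclideanSpace ℝ (Fin d)))
    (c₁ c₂ : ℝ) (hc₁ : 0 < c₁)
    (hAhlfors : ∀ x ∈ Ω, ∀ r : ℝ, 0 < r → r ≤ 1 →
      ENNReal.ofReal (c₁ * r ^ d) ≤ volume (Ω ∩ ball x r) ∧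
        volume (Ω ∩ ball x r) ≤ ENNReal.ofReal (c₂ * r ^ d))
    (δ a₀ C₁ : ℝ) (hδ0 : 0 < δ) (hδ1 : δ < 1) (ha₀0 : 0 < a₀) (ha₀1 : a₀ ≤ 1) (hC₁ : 0 < C₁)
    (M : ℝ) (hM : (d : ℝ) + 1 < M) :
    ∃ cM > 0, ∀ (k : ℕ) (Δ : Set (Set (EuclideanSpace ℝ (Fin d)))),
      Δ.Countable →
      (∀ R ∈ Δ, IsOpen R ∧ R ⊆ Ω) →
      (Δ.Pairwise Disjoint) →
      (∀ R ∈ Δ, EMetric.diam R ≤ ENNReal.ofReal (C₁ * δ ^ k)) →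
      (∀ R ∈ Δ, ∃ z ∈ Ω, ball z (a₀ * δ ^ k) ∩ Ω ⊆ R) →
      ∀ t : ℝ, δ ^ (k + 1) < t → t ≤ δ ^ k →
      ∀ x : EuclideanSpace ℝ (Fin d),
        ∑' R : Δ, (1 + EMetric.infEdist x (R : Set (EuclideanSpace ℝ (Fin d))) /
            ENNReal.ofReal t) ^ (-M) ≤ ENNReal.ofReal cM := by
  set K := ENNReal.ofReal (((1 + C₁ / δ) / a₀) ^ d / c₁) *
    volume (ball (0 : EuclideanSpace ℝ (Fin d)) 1)
  set S := ∑' n : ℕ, ((n : ℝ≥0∞) + 1) ^ ((d : ℝ) - M)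
  obtain ⟨cM, hcM, hKS_le⟩ := ENNReal.exists_pos_le_ofReal (a := K * S) <| ENNReal.mul_ne_top
    (ENNReal.mul_ne_top ENNReal.ofReal_ne_top measure_ball_lt_top.ne)
    (ENNReal.tsum_natCast_add_one_rpow_ne_top (by linarith))
  refine ⟨cM, hcM, ?_⟩
  intro k Δ _ hopen hdisj hdiam hcenter t htl htu x
  have ht : 0 < t := (pow_pos hδ0 _).trans htl
  have hvol : ∀ R : Δ, ENNReal.ofReal (c₁ * (a₀ * t) ^ finrank ℝ (EuclideanSpace ℝ (Fin d)))
      ≤ volume (R : Set (EuclideanSpace ℝ (Fin d))) := by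
    intro R
    obtain ⟨z, hzΩ, hz⟩ := hcenter R R.2
    rw [finrank_euclideanSpace_fin]
    exact ofReal_mul_pow_le_measure_of_ball_inter_subset (fun y hy r hr0 hr1 =>
      (hAhlfors y hy r hr0 hr1).1) hc₁.le hzΩ (by positivity) (by gcongr)
      (mul_le_one₀ ha₀1 (pow_nonneg hδ0.le k) (pow_le_one₀ hδ0.le hδ1.le)) hz
  have hdiam_t : ∀ R : Δ,
      ediam (R : Set (EuclideanSpace ℝ (Fin d))) ≤ ENNReal.ofReal (C₁ / δ * t) := by
    intro R
    refine (hdiam R R.2).trans (ENNReal.ofReal_le_ofReal ?_)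
    rw [div_mul_eq_mul_div, le_div_iff₀ hδ0, mul_assoc, ← pow_succ]
    gcongr
  have hsum := tsum_one_add_infEDist_div_rpow_neg_le volume hdisj.subtype
    (fun R => (hopen R R.2).1.measurableSet) hc₁ ha₀0 (by positivity) ht
    (show 0 ≤ M by linarith) hvol hdiam_t x
  rw [finrank_euclideanSpace_fin] at hsum
  exact hsum.trans hKS_le

/-- Summing the off-diagonal weights `⟨dist(x,R)/t⟩^{-M}` over all dyadic cubes `R` of step
size `t` gives a bound independent of `x` and `t`, provided `M > d + 1`. -/
theorem sum_offdiagonal_weights_bounded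
    (d : ℕ) (hd : 1 ≤ d)
    (Ω : Set (EuclideanSpace ℝ (Fin d)))
    (c₁ c₂ : ℝ) (hc₁ : 0 < c₁) (hc₁₂ : c₁ ≤ c₂)
    (hAhlfors : ∀ x ∈ Ω, ∀ r : ℝ, 0 < r → r ≤ 1 →
      ENNReal.ofReal (c₁ * r ^ d) ≤ volume (Ω ∩ ball x r) ∧
        volume (Ω ∩ ball x r) ≤ ENNReal.ofReal (c₂ * r ^ d))
    (δ a₀ C₁ : ℝ) (hδ0 : 0 < δ) (hδ1 : δ < 1) (ha₀0 : 0 < a₀) (ha₀1 : a₀ ≤ 1) (hC₁ : 0 < C₁)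
    (M : ℝ) (hM : (d : ℝ) + 1 < M) :
    ∃ cM > 0, ∀ (k : ℕ) (Δ : Set (Set (EuclideanSpace ℝ (Fin d)))),
      Δ.Countable →
      (∀ R ∈ Δ, IsOpen R ∧ R ⊆ Ω) →
      (Δ.Pairwise Disjoint) →
      (∀ R ∈ Δ, EMetric.diam R ≤ ENNReal.ofReal (C₁ * δ ^ k)) →
      (∀ R ∈ Δ, ∃ z ∈ Ω, ball z (a₀ * δ ^ k) ∩ Ω ⊆ R) →
      ∀ t : ℝ, δ ^ (k + 1) < t → t ≤ δ ^ k →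
      ∀ x : EuclideanSpace ℝ (Fin d),
        ∑' R : Δ, (1 + EMetric.infEdist x (R : Set (EuclideanSpace ℝ (Fin d))) /
            ENNReal.ofReal t) ^ (-M) ≤ ENNReal.ofReal cM :=
  sum_offdiagonal_weights_bounded_general d Ω c₁ c₂ hc₁ hAhlfors δ a₀ C₁ hδ0 hδ1 ha₀0 ha₀1 hC₁ M hM
end

section
/- Let d ≥ 1, let Ω ⊆ ℝ^d satisfy the d-Ahlfors condition, let δ ∈ (0,1), a₀ ∈ (0,1], C₁ > 0 and k ∈ ℕ, and let Δ be a countable collection of pairwise disjoint open subsets of Ω such that every R ∈ Δ has diam(R) ≤ C₁ δ^k and contains B(z_R, a₀ δ^k) ∩ Ω for some z_R ∈ Ω. Let t ∈ (δ^{k+1}, δ^k], let M > d+1, let l ∈ ℕ, let Q ∈ Δ, and let F ⊆ ℝ^d be a set with dist(Q, F) ≥ l t. Then there exist constants c_{l,1}, c_{l,2} ≥ 0, depending only on l, d, M, δ, a₀, C₁ and the d-Ahlfors constants of Ω, such that ∑_{R ∈ Δ, R ∩ F ≠ ∅} ⟨dist(Q, R ∩ F)/s⟩^{−M} ≤ c_{l,1}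 + c_{l,2} (s/t)^M for all s > 0; moreover, if l ≥ 1 one can take c_{l,1} = 0. -/
open MeasureTheory Metric Set
open scoped ENNReal NNReal

/-- The (extended) distance between two subsets of a pseudo-e-metric space, with the
convention that the distance to/from the empty set is `∞`. -/
noncomputable def setEDist {α : Type*} [PseudoEMetricSpace α] (A B : Set α) : ℝ≥0∞ :=
  ⨅ x ∈ A, EMetric.infEdist x B

/-!
Sort the cubes `R` into layers according to `j t ≤ dist(Q, R ∩ F) < (j + 1) t`. A cube of
layer `j` lies in a ball of radius `(j + 1 + 2C) t` around a point of `Q`, and it contains a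
piece of `Ω` of volume `≳ t^d`; since the cubes are disjoint, layer `j` has `≲ (j + 1)^d`
cubes, each of weight at most `⟨j t / s⟩^{-M}`. Summing over `j` gives `≲ (s / t)^M ∑ j^{d-M}`
for `j ≥ 1`, finite as `M > d + 1`, plus the layer `j = 0`, which is empty when `l ≥ 1`.
-/

section SetEDist

variable {α : Type*} [PseudoEMetricSpace α]

theorem setEDist_anti_right {A B B' : Set α} (h : B ⊆ B') : setEDist A B' ≤ setEDist A B :=
  iInf₂_mono fun _ _ => infEDist_anti h

theorem subset_closedEBall_of_setEDist_lt {Q R : Set α} {x₀ : α} (hx₀ : x₀ ∈ Q) {r : ℝ≥0∞}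
    (h : setEDist Q R < r) : R ⊆ closedEBall x₀ (ediam R + r + ediam Q) := by
  obtain ⟨x, hxQ, hx⟩ : ∃ x ∈ Q, infEDist x R < r := by
    simp only [setEDist, iInf_lt_iff, exists_prop] at h
    exact h
  obtain ⟨y, hyR, hxy⟩ := infEDist_lt_iff.1 hx
  intro z hz
  calc edist z x₀ ≤ edist z y + edist y x + edist x x₀ := edist_triangle4 _ _ _ _
    _ ≤ ediam R + r + ediam Q := by
      gcongr
      · exact edist_le_ediam_of_mem hz hyR
      · rw [edist_comm]; exact hxy.le
      · exact edist_le_ediam_of_mem hxQ hx₀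

end SetEDist

theorem Set.encard_mul_le_measure_of_pairwiseDisjoint {α ι : Type*} [MeasurableSpace α]
    (μ : Measure α) {S : Set ι} {A : ι → Set α} {B : Set α} {v : ℝ≥0∞}
    (hdisj : S.PairwiseDisjoint A) (hmeas : ∀ i ∈ S, MeasurableSet (A i))
    (hsub : ∀ i ∈ S, A i ⊆ B) (hv : ∀ i ∈ S, v ≤ μ (A i)) :
    S.encard * v ≤ μ B :=
  calc S.encard * v = ∑' _ : S, v := (ENNReal.tsum_set_const S v).symm
    _ ≤ ∑' i : S, μ (A i) := ENNReal.tsum_le_tsum fun i => hv i i.2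
    _ ≤ μ (⋃ i : S, A i) := tsum_meas_le_meas_iUnion_of_disjoint μ (fun i => hmeas i i.2)
        fun i j hij => hdisj i.2 j.2 (Subtype.coe_injective.ne hij)
    _ ≤ μ B := measure_mono (iUnion_subset fun i => hsub i i.2)

theorem encard_setEDist_lt_mul_le_measure {α : Type*} [PseudoEMetricSpace α] [MeasurableSpace α]
    [OpensMeasurableSpace α] (μ : Measure α) {Δ : Set (Set α)} (hopen : ∀ R ∈ Δ, IsOpen R)
    (hdisj : Δ.Pairwise Disjoint) {D v r : ℝ≥0∞} (hdiam : ∀ R ∈ Δ, ediam R ≤ D)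
    (hv : ∀ R ∈ Δ, v ≤ μ R) {Q : Set α} {x₀ : α} (hQ : Q ∈ Δ) (hx₀ : x₀ ∈ Q) :
    {R ∈ Δ | setEDist Q R < r}.encard * v ≤ μ (closedEBall x₀ (D + r + D)) := by
  refine encard_mul_le_measure_of_pairwiseDisjoint μ (A := id) (hdisj.mono (sep_subset _ _))
    (fun R hR => (hopen R hR.1).measurableSet) (fun R hR => ?_) fun R hR => hv R hR.1
  refine (subset_closedEBall_of_setEDist_lt hx₀ hR.2).trans (closedEBall_subset_closedEBall ?_)
  gcongr
  exacts [hdiam R hR.1, hdiam Q hQ]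

theorem ENNReal.tsum_subtype_le_tsum_tsum_subtype {ι κ : Type*} {s : Set ι} {f : ι → ℝ≥0∞}
    {L : κ → Set ι} (hcover : s ∩ Function.support f ⊆ ⋃ j, L j) :
    ∑' i : s, f i ≤ ∑' (j) (i : L j), f i := by
  simp_rw [tsum_subtype]
  rw [ENNReal.tsum_comm]
  refine ENNReal.tsum_le_tsum fun i => ?_
  by_cases hi : i ∈ s ∩ Function.support f
  · obtain ⟨j, hj⟩ := mem_iUnion.1 (hcover hi)
    calc s.indicator f i = (L j).indicator f i := by
          rw [indicator_of_mem hi.1, indicator_of_mem hj]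
      _ ≤ ∑' j, (L j).indicator f i := ENNReal.le_tsum j
  · rw [indicator_apply_eq_zero.2 fun his => not_not.1 fun hfi => hi ⟨his, hfi⟩]
    exact zero_le

theorem ENNReal.one_add_div_rpow_neg_le {x : ℝ≥0∞} {a s M : ℝ} (ha : 0 ≤ a) (hs : 0 < s)
    (hM : 0 ≤ M) (hx : ENNReal.ofReal a ≤ x) :
    (1 + x / ENNReal.ofReal s) ^ (-M) ≤ ENNReal.ofReal ((1 + a / s) ^ (-M)) := by
  rw [← ENNReal.ofReal_rpow_of_pos (by positivity), ENNReal.ofReal_add zero_le_one (by positivity),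
    ENNReal.ofReal_one, ENNReal.ofReal_div_of_pos hs, ENNReal.rpow_neg, ENNReal.rpow_neg]
  gcongr

theorem one_add_div_rpow_neg_le {n u M : ℝ} (hn : 0 < n) (hu : 0 < u) (hM : 0 ≤ M) :
    (1 + n / u) ^ (-M) ≤ u ^ M * n ^ (-M) := by
  calc (1 + n / u) ^ (-M) ≤ (n / u) ^ (-M) :=
        Real.rpow_le_rpow_of_nonpos (by positivity) (by linarith) (neg_nonpos.2 hM)
    _ = u ^ M * n ^ (-M) := by
      rw [Real.div_rpow hn.le hu.le, Real.rpow_neg hu.le, div_inv_eq_mul, mul_comm]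

theorem tsum_succ_le_of_le_pow_mul_rpow_neg {d : ℕ} {A C M t s : ℝ} (hA : 0 ≤ A) (hC : 0 ≤ C) (ht : 0 < t)
    (hs : 0 < s) (hM : (d : ℝ) + 1 < M) {L : ℕ → ℝ≥0∞}
    (hL : ∀ j : ℕ, L j ≤ ENNReal.ofReal (A * (j + 1 + 2 * C) ^ d * (1 + j * t / s) ^ (-M))) :
    ∑' j, L (j + 1) ≤ ENNReal.ofReal
      (A * (2 + 2 * C) ^ d * (∑' j : ℕ, ((j : ℝ) + 1) ^ ((d : ℝ) - M)) * (s / t) ^ M) := by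
  have hsum : Summable fun j : ℕ => ((j : ℝ) + 1) ^ ((d : ℝ) - M) := by
    have := (summable_nat_add_iff 1).2 (Real.summable_nat_rpow.2 (by linarith : (d : ℝ) - M < -1))
    simpa using this
  have hM0 : 0 ≤ M := by linarith [(d.cast_nonneg : (0 : ℝ) ≤ d)]
  have hterm (j : ℕ) : L (j + 1) ≤ ENNReal.ofReal
      (A * (2 + 2 * C) ^ d * (s / t) ^ M * ((j : ℝ) + 1) ^ ((d : ℝ) - M)) := by
    refine (hL (j + 1)).trans (ENNReal.ofReal_le_ofReal ?_)
    have hn : (1 : ℝ) ≤ j + 1 := by linarith [(j.cast_nonneg : (0 : ℝ) ≤ j)]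
    push_cast
    calc A * ((j : ℝ) + 1 + 1 + 2 * C) ^ d * (1 + (j + 1) * t / s) ^ (-M)
        ≤ A * ((2 + 2 * C) * (j + 1)) ^ d * ((s / t) ^ M * ((j : ℝ) + 1) ^ (-M)) := by
          gcongr
          · nlinarith
          · rw [← div_div_eq_mul_div]
            exact one_add_div_rpow_neg_le (by positivity) (by positivity) hM0
      _ = A * (2 + 2 * C) ^ d * (s / t) ^ M * ((j : ℝ) + 1) ^ ((d : ℝ) - M) := by
          rw [sub_eq_add_neg, Real.rpow_add (by positivity), Real.rpow_natCast, mul_pow]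
          ring
  calc ∑' j, L (j + 1)
      ≤ ∑' j : ℕ, ENNReal.ofReal
          (A * (2 + 2 * C) ^ d * (s / t) ^ M * ((j : ℝ) + 1) ^ ((d : ℝ) - M)) :=
        ENNReal.tsum_le_tsum hterm
    _ = _ := by
      rw [← ENNReal.ofReal_tsum_of_nonneg (fun j => by positivity) (hsum.mul_left _),
        tsum_mul_left]
      ring_nf

section DistLayer

variable {α : Type*} [PseudoEMetricSpace α]

def distLayer (Q F : Set α) (t : ℝ) (j : ℕ) : Set (Set α) :=
  {R | ENNReal.ofReal (j * t) ≤ setEDist Q (R ∩ F) ∧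
    setEDist Q (R ∩ F) < ENNReal.ofReal ((j + 1) * t)}

theorem iUnion_distLayer {Q F : Set α} {t : ℝ} (ht : 0 < t) :
    ⋃ j, distLayer Q F t j = {R | setEDist Q (R ∩ F) ≠ ∞} := by
  ext R
  simp only [distLayer, mem_iUnion, mem_ofPred_eq]
  constructor
  · rintro ⟨j, -, hlt⟩
    exact (hlt.trans ENNReal.ofReal_lt_top).ne
  · intro hR
    refine ⟨⌊(setEDist Q (R ∩ F)).toReal / t⌋₊, (ENNReal.ofReal_le_iff_le_toReal hR).2 ?_,
      (ENNReal.lt_ofReal_iff_toReal_lt hR).2 ?_⟩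
    · exact (le_div_iff₀ ht).1 (Nat.floor_le (by positivity))
    · exact (div_lt_iff₀ ht).1 (Nat.lt_floor_add_one _)

theorem setEDist_lt_of_mem_distLayer {Q F R : Set α} {t : ℝ} {j : ℕ}
    (hR : R ∈ distLayer Q F t j) : setEDist Q R < ENNReal.ofReal ((j + 1) * t) :=
  (setEDist_anti_right inter_subset_left).trans_lt hR.2

theorem distLayer_zero_eq_empty {Q F : Set α} {t : ℝ} (hQF : ENNReal.ofReal t ≤ setEDist Q F) :
    distLayer Q F t 0 = ∅ :=
  eq_empty_of_forall_notMem fun R hR => (hQF.trans (setEDist_anti_right inter_subset_right)).not_gt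
    (by simpa using hR.2)

end DistLayer

section Cubes

variable {d : ℕ} {Ω : Set (EuclideanSpace ℝ (Fin d))} {Δ : Set (Set (EuclideanSpace ℝ (Fin d)))}
  {c a C t : ℝ}

-- A ball of radius `ρ t` holds at most `cubeCountConst d c a * ρ ^ d` of the cubes below.
noncomputable def cubeCountConst (d : ℕ) (c a : ℝ) : ℝ :=
  (volume (ball (0 : EuclideanSpace ℝ (Fin d)) 1)).toReal / (c * a ^ d)

theorem cubeCountConst_nonneg (hc : 0 ≤ c) (ha : 0 ≤ a) : 0 ≤ cubeCountConst d c a := by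
  unfold cubeCountConst
  positivity

structure IsCubeFamily (Ω : Set (EuclideanSpace ℝ (Fin d)))
    (Δ : Set (Set (EuclideanSpace ℝ (Fin d)))) (c a C t : ℝ) : Prop where
  volume_inter_ball : ∀ x ∈ Ω, ENNReal.ofReal (c * (a * t) ^ d) ≤ volume (Ω ∩ ball x (a * t))
  isOpen : ∀ R ∈ Δ, IsOpen R
  pairwise_disjoint : Δ.Pairwise Disjoint
  ediam_le : ∀ R ∈ Δ, ediam R ≤ ENNReal.ofReal (C * t)
  exists_ball_subset : ∀ R ∈ Δ, ∃ z ∈ Ω, ball z (a * t) ∩ Ω ⊆ R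

namespace IsCubeFamily

variable (hΔ : IsCubeFamily Ω Δ c a C t) (hc : 0 < c) (ha : 0 < a) (ht : 0 < t) (hC : 0 ≤ C)
  {Q : Set (EuclideanSpace ℝ (Fin d))} (hQ : Q ∈ Δ)
include hΔ hc ha ht hC hQ

theorem encard_setEDist_lt_le {x₀ : EuclideanSpace ℝ (Fin d)} (hx₀ : x₀ ∈ Q) {m : ℝ}
    (hm : 0 ≤ m) :
    ({R ∈ Δ | setEDist Q R < ENNReal.ofReal (m * t)}.encard : ℝ≥0∞) ≤
      ENNReal.ofReal (cubeCountConst d c a * (m + 2 * C) ^ d) := by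
  have hvol (R) (hR : R ∈ Δ) : ENNReal.ofReal (c * (a * t) ^ d) ≤ volume R := by
    obtain ⟨z, hz, hzR⟩ := hΔ.exists_ball_subset R hR
    exact (hΔ.volume_inter_ball z hz).trans (measure_mono ((inter_comm _ _).trans_subset hzR))
  have hpack := encard_setEDist_lt_mul_le_measure volume hΔ.isOpen hΔ.pairwise_disjoint
    hΔ.ediam_le hvol hQ hx₀ (r := ENNReal.ofReal (m * t))
  have hradius : C * t + m * t + C * t = (m + 2 * C) * t := by ring
  rw [← ENNReal.ofReal_add (by positivity) (by positivity),
    ← ENNReal.ofReal_add (by positivity) (by positivity), hradius,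
    closedEBall_ofReal (by positivity), Measure.addHaar_closedBall _ _ (by positivity),
    finrank_euclideanSpace_fin, ← ENNReal.ofReal_toReal measure_ball_lt_top.ne,
    ← ENNReal.ofReal_mul (by positivity)] at hpack
  have hconst : ((m + 2 * C) * t) ^ d * (volume (ball (0 : EuclideanSpace ℝ (Fin d)) 1)).toReal
      = cubeCountConst d c a * (m + 2 * C) ^ d * (c * (a * t) ^ d) := by
    unfold cubeCountConst
    field_simp
    rw [mul_pow, mul_pow]
    ring
  rw [hconst] at hpack
  exact (ENNReal.mul_le_mul_iff_left (by simp; positivity) ENNReal.ofReal_ne_top).1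
    (hpack.trans_eq (ENNReal.ofReal_mul
      (by have := cubeCountConst_nonneg (d := d) hc.le ha.le; positivity)))

theorem tsum_distLayer_le {x₀ : EuclideanSpace ℝ (Fin d)} (hx₀ : x₀ ∈ Q)
    (F : Set (EuclideanSpace ℝ (Fin d))) {s M : ℝ} (hs : 0 < s) (hM : 0 ≤ M) (j : ℕ) :
    ∑' R : ↑(Δ ∩ distLayer Q F t j), (1 + setEDist Q (R ∩ F) / ENNReal.ofReal s) ^ (-M) ≤
      ENNReal.ofReal (cubeCountConst d c a * (j + 1 + 2 * C) ^ d * (1 + j * t / s) ^ (-M)) := by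
  have hA := cubeCountConst_nonneg (d := d) hc.le ha.le
  calc _ ≤ ∑' _ : ↑(Δ ∩ distLayer Q F t j), ENNReal.ofReal ((1 + j * t / s) ^ (-M)) :=
        ENNReal.tsum_le_tsum fun R =>
          ENNReal.one_add_div_rpow_neg_le (by positivity) hs hM R.2.2.1
    _ = (Δ ∩ distLayer Q F t j).encard * ENNReal.ofReal ((1 + j * t / s) ^ (-M)) :=
        ENNReal.tsum_set_const _ _
    _ ≤ ENNReal.ofReal (cubeCountConst d c a * (j + 1 + 2 * C) ^ d) *
          ENNReal.ofReal ((1 + j * t / s) ^ (-M)) := by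
        gcongr
        refine le_trans ?_
          (hΔ.encard_setEDist_lt_le hc ha ht hC hQ hx₀ (m := j + 1) (by positivity))
        gcongr
        exact fun R hR => ⟨hR.1, setEDist_lt_of_mem_distLayer hR.2⟩
    _ = _ := (ENNReal.ofReal_mul (by positivity)).symm

theorem tsum_one_add_setEDist_div_rpow_neg_le {F : Set (EuclideanSpace ℝ (Fin d))} {l : ℕ}
    (hQF : ENNReal.ofReal (l * t) ≤ setEDist Q F) {s M : ℝ} (hs : 0 < s) (hM : (d : ℝ) + 1 < M) :
    ∑' R : Δ, (1 + setEDist Q (R ∩ F) / ENNReal.ofReal s) ^ (-M) ≤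
      ENNReal.ofReal ((if l = 0 then cubeCountConst d c a * (1 + 2 * C) ^ d else 0) +
        cubeCountConst d c a * (2 + 2 * C) ^ d * (∑' j : ℕ, ((j : ℝ) + 1) ^ ((d : ℝ) - M)) *
          (s / t) ^ M) := by
  have hA := cubeCountConst_nonneg (d := d) hc.le ha.le
  have hM0 : 0 < M := by linarith [(d.cast_nonneg : (0 : ℝ) ≤ d)]
  obtain ⟨x₀, hx₀⟩ : Q.Nonempty := by
    obtain ⟨z, hz, hzQ⟩ := hΔ.exists_ball_subset Q hQ
    exact ⟨z, hzQ ⟨mem_ball_self (by positivity), hz⟩⟩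
  have hcover : Δ ∩ Function.support (fun R => (1 + setEDist Q (R ∩ F) / ENNReal.ofReal s) ^ (-M))
      ⊆ ⋃ j, Δ ∩ distLayer Q F t j := by
    rintro R ⟨hR, hw⟩
    rw [← inter_iUnion, iUnion_distLayer ht]
    refine ⟨hR, fun htop => hw ?_⟩
    simp [htop, ENNReal.top_div_of_ne_top, hM0]
  have hlayer := hΔ.tsum_distLayer_le hc ha ht hC hQ hx₀ F hs hM0.le
  have hlayer₀ : ∑' R : ↑(Δ ∩ distLayer Q F t 0),
      (1 + setEDist Q (R ∩ F) / ENNReal.ofReal s) ^ (-M) ≤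
        ENNReal.ofReal (if l = 0 then cubeCountConst d c a * (1 + 2 * C) ^ d else 0) := by
    split_ifs with hl
    · simpa using hlayer 0
    · have hQF' : ENNReal.ofReal t ≤ setEDist Q F := (ENNReal.ofReal_le_ofReal
        (le_mul_of_one_le_left ht.le (Nat.one_le_cast.2 (Nat.one_le_iff_ne_zero.2 hl)))).trans hQF
      simp [distLayer_zero_eq_empty hQF']
  calc _ ≤ ∑' (j) (R : ↑(Δ ∩ distLayer Q F t j)),
        (1 + setEDist Q (R ∩ F) / ENNReal.ofReal s) ^ (-M) :=
        ENNReal.tsum_subtype_le_tsum_tsum_subtype hcover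
    _ = _ := tsum_eq_zero_add' ENNReal.summable
    _ ≤ _ := add_le_add hlayer₀ (tsum_succ_le_of_le_pow_mul_rpow_neg hA hC ht hs hM hlayer)
    _ = _ := (ENNReal.ofReal_add (by positivity) (by positivity)).symm

end IsCubeFamily
end Cubes

theorem sum_offdiagonal_weights_far_set_general
    (d : ℕ)
    (Ω : Set (EuclideanSpace ℝ (Fin d)))
    (c₁ c₂ : ℝ) (hc₁ : 0 < c₁)
    (hAhlfors : ∀ x ∈ Ω, ∀ r : ℝ, 0 < r → r ≤ 1 →
      ENNReal.ofReal (c₁ * r ^ d) ≤ volume (Ω ∩ ball x r) ∧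
        volume (Ω ∩ ball x r) ≤ ENNReal.ofReal (c₂ * r ^ d))
    (δ a₀ C₁ : ℝ) (hδ0 : 0 < δ) (hδ1 : δ < 1) (ha₀0 : 0 < a₀) (ha₀1 : a₀ ≤ 1) (hC₁ : 0 < C₁)
    (M : ℝ) (hM : (d : ℝ) + 1 < M) (l : ℕ) :
    ∃ cl₁ cl₂ : ℝ, 0 ≤ cl₁ ∧ 0 ≤ cl₂ ∧ (1 ≤ l → cl₁ = 0) ∧
      ∀ (k : ℕ) (Δ : Set (Set (EuclideanSpace ℝ (Fin d)))),
      Δ.Countable →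
      (∀ R ∈ Δ, IsOpen R ∧ R ⊆ Ω) →
      (Δ.Pairwise Disjoint) →
      (∀ R ∈ Δ, EMetric.diam R ≤ ENNReal.ofReal (C₁ * δ ^ k)) →
      (∀ R ∈ Δ, ∃ z ∈ Ω, ball z (a₀ * δ ^ k) ∩ Ω ⊆ R) →
      ∀ t : ℝ, δ ^ (k + 1) < t → t ≤ δ ^ k →
      ∀ Q ∈ Δ, ∀ F : Set (EuclideanSpace ℝ (Fin d)),
        ENNReal.ofReal ((l : ℝ) * t) ≤ setEDist Q F →
        ∀ s : ℝ, 0 < s →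
          ∑' R : Δ, (1 + setEDist Q ((R : Set (EuclideanSpace ℝ (Fin d))) ∩ F) /
              ENNReal.ofReal s) ^ (-M) ≤
            ENNReal.ofReal (cl₁ + cl₂ * (s / t) ^ M) := by
  have hA := cubeCountConst_nonneg (d := d) hc₁.le ha₀0.le
  have hC : 0 ≤ C₁ / δ := by positivity
  refine ⟨if l = 0 then cubeCountConst d c₁ a₀ * (1 + 2 * (C₁ / δ)) ^ d else 0,
    cubeCountConst d c₁ a₀ * (2 + 2 * (C₁ / δ)) ^ d * ∑' j : ℕ, ((j : ℝ) + 1) ^ ((d : ℝ) - M),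
    by split_ifs <;> positivity, by positivity, fun hl => if_neg (by omega), ?_⟩
  intro k Δ _ hopen hdisj hdiam hball t ht₁ ht₂ Q hQ F hQF s hs
  have ht : 0 < t := (pow_pos hδ0 _).trans ht₁
  have hdiam_le : C₁ * δ ^ k ≤ C₁ / δ * t := by
    rw [div_mul_eq_mul_div, le_div_iff₀ hδ0, mul_assoc, ← pow_succ]
    gcongr
  have hΔ : IsCubeFamily Ω Δ c₁ a₀ (C₁ / δ) t :=
    { volume_inter_ball := fun x hx => (hAhlfors x hx _ (by positivity)
        (mul_le_one₀ ha₀1 ht.le (ht₂.trans (pow_le_one₀ hδ0.le hδ1.le)))).1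
      isOpen := fun R hR => (hopen R hR).1
      pairwise_disjoint := hdisj
      ediam_le := fun R hR => (hdiam R hR).trans (ENNReal.ofReal_le_ofReal hdiam_le)
      exists_ball_subset := fun R hR => by
        obtain ⟨z, hz, hzR⟩ := hball R hR
        exact ⟨z, hz, (inter_subset_inter_left _ (ball_subset_ball (by gcongr))).trans hzR⟩ }
  exact hΔ.tsum_one_add_setEDist_div_rpow_neg_le hc₁ ha₀0 ht hC hQ hQF hs hM

/-- Summing the weights `⟨dist(Q, R ∩ F)/s⟩^{-M}` over all dyadic cubes `R` of step size `t`,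
where `F` is a set at distance at least `l·t` from the fixed cube `Q`. Cubes with `R ∩ F = ∅`
do not contribute, since then `dist(Q, R ∩ F) = ∞` and the corresponding weight vanishes. -/
theorem sum_offdiagonal_weights_far_set
    (d : ℕ) (hd : 1 ≤ d)
    (Ω : Set (EuclideanSpace ℝ (Fin d)))
    (c₁ c₂ : ℝ) (hc₁ : 0 < c₁) (hc₁₂ : c₁ ≤ c₂)
    (hAhlfors : ∀ x ∈ Ω, ∀ r : ℝ, 0 < r → r ≤ 1 →
      ENNReal.ofReal (c₁ * r ^ d) ≤ volume (Ω ∩ ball x r) ∧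
        volume (Ω ∩ ball x r) ≤ ENNReal.ofReal (c₂ * r ^ d))
    (δ a₀ C₁ : ℝ) (hδ0 : 0 < δ) (hδ1 : δ < 1) (ha₀0 : 0 < a₀) (ha₀1 : a₀ ≤ 1) (hC₁ : 0 < C₁)
    (M : ℝ) (hM : (d : ℝ) + 1 < M) (l : ℕ) :
    ∃ cl₁ cl₂ : ℝ, 0 ≤ cl₁ ∧ 0 ≤ cl₂ ∧ (1 ≤ l → cl₁ = 0) ∧
      ∀ (k : ℕ) (Δ : Set (Set (EuclideanSpace ℝ (Fin d)))),
      Δ.Countable →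
      (∀ R ∈ Δ, IsOpen R ∧ R ⊆ Ω) →
      (Δ.Pairwise Disjoint) →
      (∀ R ∈ Δ, EMetric.diam R ≤ ENNReal.ofReal (C₁ * δ ^ k)) →
      (∀ R ∈ Δ, ∃ z ∈ Ω, ball z (a₀ * δ ^ k) ∩ Ω ⊆ R) →
      ∀ t : ℝ, δ ^ (k + 1) < t → t ≤ δ ^ k →
      ∀ Q ∈ Δ, ∀ F : Set (EuclideanSpace ℝ (Fin d)),
        ENNReal.ofReal ((l : ℝ) * t) ≤ setEDist Q F →
        ∀ s : ℝ, 0 < s →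
          ∑' R : Δ, (1 + setEDist Q ((R : Set (EuclideanSpace ℝ (Fin d))) ∩ F) /
              ENNReal.ofReal s) ^ (-M) ≤
            ENNReal.ofReal (cl₁ + cl₂ * (s / t) ^ M) :=
  sum_offdiagonal_weights_far_set_general d Ω c₁ c₂ hc₁ hAhlfors δ a₀ C₁ hδ0 hδ1 ha₀0 ha₀1 hC₁ M hM
    l
end
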